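/- arXiv:2507.09803 — 11 statements merged into one kernel-verified Lean document; each statement's English description precedes it below -/
import Mathlib

section
/- Let a ∈ ℝ, a ≠ 0, and let f, f̃, g, g̃, h, h̃ : ℤ × ℝ → ℂ be such that for each k ∈ ℤ the functions t ↦ f_k(t), t ↦ f̃_k(t), t ↦ h_k(t) are differentiable, and suppose the semi-discrete bilinear system holds for all k ∈ ℤ and t ∈ ℝ: (i/a)(g_{k+1} f_k − g_k f_{k+1}) + h_{k+1} f̃_k = 0; (i/a)(f_{k+1} f̃_k − f_k f̃_{k+1}) + h_{k+1} h̃_k = 0; i(h_k' f̃_k − h_k f̃_k') + g_k f_k = 0; i(f_k' f̃_k − f_k f̃_k') = g_k g̃_k, where ' denotes d/dt. Define u_k = g_k/f̃_k, v_k = h_k/f_k, ũ_k = g̃_k/f_k, ṽ_k = h̃_k/f̃_k. Then for every k ∈ ℤ and t ∈ ℝ at which f_k(t), f̃_k(t), f_{k+1}(t), f̃_{k+1}(t) are all nonzero: (i/a)(u_{k+1}(t) − u_k(t)) + v_{k+1}(t) + u_{k+1}(t) v_{k+1}(t) ṽ_k(t) = 0 and i·(d/dt)v_k(t) + u_k(t)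 + v_k(t) u_k(t) ũ_k(t) = 0. -/
/-! After clearing denominators each equation of the model is a linear combination of the
bilinear equations: `f̃_{k+1}·(B1) + g_{k+1}·(B2)` for the discrete one and, after the quotient
rule for `v_k = h_k / f_k`, `f_k·(B3) − h_k·(B4)` for the differential one. -/

section Bilinear

variable {K : Type*} [Field K]

theorem discrete_thirring_of_bilinear (c g₀ g₁ f₀ f₁ ft₀ ft₁ h₁ ht₀ : K)
    (hf₁ : f₁ ≠ 0) (hft₀ : ft₀ ≠ 0) (hft₁ : ft₁ ≠ 0)
    (bil₁ : c * (g₁ * f₀ - g₀ * f₁) + h₁ * ft₀ = 0)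
    (bil₂ : c * (f₁ * ft₀ - f₀ * ft₁) + h₁ * ht₀ = 0) :
    c * (g₁ / ft₁ - g₀ / ft₀) + h₁ / f₁ + g₁ / ft₁ * (h₁ / f₁) * (ht₀ / ft₀) = 0 := by
  field_simp
  linear_combination ft₁ * bil₁ + g₁ * bil₂

theorem continuous_thirring_of_bilinear (c f f' ft ft' g gt h h' : K)
    (hf : f ≠ 0) (hft : ft ≠ 0)
    (bil₃ : c * (h' * ft - h * ft') + g * f = 0)
    (bil₄ : c * (f' * ft - f * ft') = g * gt) :
    c * ((h' * f - h * f') / f ^ 2) + g / ft + h / f * (g / ft) * (gt / f) = 0 := by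
  field_simp
  linear_combination f * bil₃ - h * bil₄

end Bilinear

theorem semi_discrete_bilinear_to_MT_general (a : ℝ)
    (f ft g gt h ht : ℤ → ℝ → ℂ)
    (hdf : ∀ k, Differentiable ℝ (f k))
    (hdh : ∀ k, Differentiable ℝ (h k))
    (bil1 : ∀ (k : ℤ) (t : ℝ),
      (Complex.I / (a : ℂ)) * (g (k + 1) t * f k t - g k t * f (k + 1) t)
        + h (k + 1) t * ft k t = 0)
    (bil2 : ∀ (k : ℤ) (t : ℝ),
      (Complex.I / (a : ℂ)) * (f (k + 1) t * ft k t - f k t * ft (k + 1) t)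
        + h (k + 1) t * ht k t = 0)
    (bil3 : ∀ (k : ℤ) (t : ℝ),
      Complex.I * (deriv (h k) t * ft k t - h k t * deriv (ft k) t) + g k t * f k t = 0)
    (bil4 : ∀ (k : ℤ) (t : ℝ),
      Complex.I * (deriv (f k) t * ft k t - f k t * deriv (ft k) t) = g k t * gt k t)
    (u v ut vt : ℤ → ℝ → ℂ)
    (hu : ∀ k t, u k t = g k t / ft k t)
    (hv : ∀ k t, v k t = h k t / f k t)
    (hut : ∀ k t, ut k t = gt k t / f k t)
    (hvt : ∀ k t, vt k t = ht k t / ft k t) :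
    ∀ (k : ℤ) (t : ℝ), f k t ≠ 0 → ft k t ≠ 0 → f (k + 1) t ≠ 0 → ft (k + 1) t ≠ 0 →
      (Complex.I / (a : ℂ)) * (u (k + 1) t - u k t) + v (k + 1) t
        + u (k + 1) t * v (k + 1) t * vt k t = 0 ∧
      Complex.I * deriv (v k) t + u k t + v k t * u k t * ut k t = 0 := by
  intro k t hf hft hf₁ hft₁
  have hv' : deriv (v k) t =
      (deriv (h k) t * f k t - h k t * deriv (f k) t) / f k t ^ 2 := by
    rw [show v k = fun s => h k s / f k s from funext (hv k)]
    exact deriv_div (hdh k t) (hdf k t) hf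
  constructor
  · rw [hu, hu, hv, hvt]
    exact discrete_thirring_of_bilinear _ _ _ _ _ _ _ _ _ hf₁ hft hft₁ (bil1 k t) (bil2 k t)
  · rw [hv', hu, hv, hut]
    exact continuous_thirring_of_bilinear _ _ _ _ _ _ _ _ _ hf hft (bil3 k t) (bil4 k t)

/-- The dependent-variable transformation `u_k = g_k/f̃_k`, `v_k = h_k/f_k`,
`ũ_k = g̃_k/f_k`, `ṽ_k = h̃_k/f̃_k` converts the semi-discrete bilinear system into
the semi-discrete massive Thirring model. -/
theorem semi_discrete_bilinear_to_MT (a : ℝ) (ha : a ≠ 0)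
    (f ft g gt h ht : ℤ → ℝ → ℂ)
    (hdf : ∀ k, Differentiable ℝ (f k))
    (hdft : ∀ k, Differentiable ℝ (ft k))
    (hdh : ∀ k, Differentiable ℝ (h k))
    (bil1 : ∀ (k : ℤ) (t : ℝ),
      (Complex.I / (a : ℂ)) * (g (k + 1) t * f k t - g k t * f (k + 1) t)
        + h (k + 1) t * ft k t = 0)
    (bil2 : ∀ (k : ℤ) (t : ℝ),
      (Complex.I / (a : ℂ)) * (f (k + 1) t * ft k t - f k t * ft (k + 1) t)
        + h (k + 1) t * ht k t = 0)
    (bil3 : ∀ (k : ℤ) (t : ℝ),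
      Complex.I * (deriv (h k) t * ft k t - h k t * deriv (ft k) t) + g k t * f k t = 0)
    (bil4 : ∀ (k : ℤ) (t : ℝ),
      Complex.I * (deriv (f k) t * ft k t - f k t * deriv (ft k) t) = g k t * gt k t)
    (u v ut vt : ℤ → ℝ → ℂ)
    (hu : ∀ k t, u k t = g k t / ft k t)
    (hv : ∀ k t, v k t = h k t / f k t)
    (hut : ∀ k t, ut k t = gt k t / f k t)
    (hvt : ∀ k t, vt k t = ht k t / ft k t) :
    ∀ (k : ℤ) (t : ℝ), f k t ≠ 0 → ft k t ≠ 0 → f (k + 1) t ≠ 0 → ft (k + 1) t ≠ 0 →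
      (Complex.I / (a : ℂ)) * (u (k + 1) t - u k t) + v (k + 1) t
        + u (k + 1) t * v (k + 1) t * vt k t = 0 ∧
      Complex.I * deriv (v k) t + u k t + v k t * u k t * ut k t = 0 :=
  semi_discrete_bilinear_to_MT_general a f ft g gt h ht hdf hdh bil1 bil2 bil3 bil4 u v ut vt hu hv
    hut hvt
end

section
/- Let a, b ∈ ℝ be nonzero and let f, f̃, g, g̃, h, h̃ : ℤ × ℤ → ℂ (written f^l_k etc.) satisfy the fully discrete bilinear system for all k, l ∈ ℤ: (i/a)(g^l_{k+1} f^l_k − g^l_k f^l_{k+1}) + h^l_{k+1} f̃^l_k = 0; (i/a)(f^l_{k+1} f̃^l_k − f^l_k f̃^l_{k+1}) + h^l_{k+1} h̃^l_k = 0; (i/b)(h^{l+1}_k f̃^l_k − h^l_k f̃^{l+1}_k) + g^{l+1}_k f^l_k = 0; (i/b)(f^{l+1}_k f̃^l_k − f^l_k f̃^{l+1}_k) = g^{l+1}_k g̃^l_k. Define u^l_k = g^l_k/f̃^l_k, v^l_k = h^l_k/f^l_k, ũ^l_k = g̃^l_k/f^l_k, ṽ^l_k = h̃^l_k/f̃^l_k.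 Then for all k,l ∈ ℤ at which f^l_k, f̃^l_k, f^l_{k+1}, f̃^l_{k+1}, f^{l+1}_k, f̃^{l+1}_k are nonzero: (i/a)(u^l_{k+1} − u^l_k) + v^l_{k+1} + u^l_{k+1} v^l_{k+1} ṽ^l_k = 0 and (i/b)(v^{l+1}_k − v^l_k) + u^{l+1}_k + v^{l+1}_k u^{l+1}_k ũ^l_k = 0. -/
/-!
Clearing the denominators `F₁ E₁ F₀`, each equation of the model is `F₁` times a bilinear equation
of the first kind minus `p₁` times one of the second kind. The two equations of the model are the
same identity, with the roles of `(f, g, h̃)` and `(f̃, h, g̃)` exchanged.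
-/

theorem discrete_thirring_of_bilinear_s3 {K : Type*} [Field K] {c p₀ p₁ q₁ r₀ F₀ F₁ E₀ E₁ : K}
    (hp : c * (p₁ * E₀ - p₀ * E₁) + q₁ * F₀ = 0) (hF : c * (F₁ * E₀ - F₀ * E₁) = q₁ * r₀)
    (hF₀ : F₀ ≠ 0) (hF₁ : F₁ ≠ 0) (hE₁ : E₁ ≠ 0) :
    c * (p₁ / F₁ - p₀ / F₀) + q₁ / E₁ + p₁ / F₁ * (q₁ / E₁) * (r₀ / F₀) = 0 := by
  field_simp
  linear_combination F₁ * hp - p₁ * hF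

theorem fully_discrete_bilinear_to_MT_general (a b : ℝ)
    (f ft g gt h ht : ℤ → ℤ → ℂ)
    (bil1 : ∀ k l : ℤ,
      (Complex.I / (a : ℂ)) * (g (k + 1) l * f k l - g k l * f (k + 1) l)
        + h (k + 1) l * ft k l = 0)
    (bil2 : ∀ k l : ℤ,
      (Complex.I / (a : ℂ)) * (f (k + 1) l * ft k l - f k l * ft (k + 1) l)
        + h (k + 1) l * ht k l = 0)
    (bil3 : ∀ k l : ℤ,
      (Complex.I / (b : ℂ)) * (h k (l + 1) * ft k l - h k l * ft k (l + 1))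
        + g k (l + 1) * f k l = 0)
    (bil4 : ∀ k l : ℤ,
      (Complex.I / (b : ℂ)) * (f k (l + 1) * ft k l - f k l * ft k (l + 1))
        = g k (l + 1) * gt k l)
    (u v ut vt : ℤ → ℤ → ℂ)
    (hu : ∀ k l, u k l = g k l / ft k l)
    (hv : ∀ k l, v k l = h k l / f k l)
    (hut : ∀ k l, ut k l = gt k l / f k l)
    (hvt : ∀ k l, vt k l = ht k l / ft k l) :
    ∀ k l : ℤ, f k l ≠ 0 → ft k l ≠ 0 → f (k + 1) l ≠ 0 → ft (k + 1) l ≠ 0 →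
      f k (l + 1) ≠ 0 → ft k (l + 1) ≠ 0 →
      (Complex.I / (a : ℂ)) * (u (k + 1) l - u k l) + v (k + 1) l
        + u (k + 1) l * v (k + 1) l * vt k l = 0 ∧
      (Complex.I / (b : ℂ)) * (v k (l + 1) - v k l) + u k (l + 1)
        + v k (l + 1) * u k (l + 1) * ut k l = 0 := by
  intro k l hf hft hf_k hft_k hf_l hft_l
  simp only [hu, hv, hut, hvt]
  exact ⟨discrete_thirring_of_bilinear_s3 (bil1 k l) (by linear_combination -bil2 k l) hft hft_k hf_k,
    discrete_thirring_of_bilinear_s3 (bil3 k l) (bil4 k l) hf hf_l hft_l⟩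

/-- The dependent-variable transformation `u^l_k = g^l_k/f̃^l_k`, `v^l_k = h^l_k/f^l_k`,
`ũ^l_k = g̃^l_k/f^l_k`, `ṽ^l_k = h̃^l_k/f̃^l_k` converts the fully discrete bilinear
system into the fully discrete massive Thirring model. -/
theorem fully_discrete_bilinear_to_MT (a b : ℝ) (ha : a ≠ 0) (hb : b ≠ 0)
    (f ft g gt h ht : ℤ → ℤ → ℂ)
    (bil1 : ∀ k l : ℤ,
      (Complex.I / (a : ℂ)) * (g (k + 1) l * f k l - g k l * f (k + 1) l)
        + h (k + 1) l * ft k l = 0)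
    (bil2 : ∀ k l : ℤ,
      (Complex.I / (a : ℂ)) * (f (k + 1) l * ft k l - f k l * ft (k + 1) l)
        + h (k + 1) l * ht k l = 0)
    (bil3 : ∀ k l : ℤ,
      (Complex.I / (b : ℂ)) * (h k (l + 1) * ft k l - h k l * ft k (l + 1))
        + g k (l + 1) * f k l = 0)
    (bil4 : ∀ k l : ℤ,
      (Complex.I / (b : ℂ)) * (f k (l + 1) * ft k l - f k l * ft k (l + 1))
        = g k (l + 1) * gt k l)
    (u v ut vt : ℤ → ℤ → ℂ)
    (hu : ∀ k l, u k l = g k l / ft k l)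
    (hv : ∀ k l, v k l = h k l / f k l)
    (hut : ∀ k l, ut k l = gt k l / f k l)
    (hvt : ∀ k l, vt k l = ht k l / ft k l) :
    ∀ k l : ℤ, f k l ≠ 0 → ft k l ≠ 0 → f (k + 1) l ≠ 0 → ft (k + 1) l ≠ 0 →
      f k (l + 1) ≠ 0 → ft k (l + 1) ≠ 0 →
      (Complex.I / (a : ℂ)) * (u (k + 1) l - u k l) + v (k + 1) l
        + u (k + 1) l * v (k + 1) l * vt k l = 0 ∧
      (Complex.I / (b : ℂ)) * (v k (l + 1) - v k l) + u k (l + 1)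
        + v k (l + 1) * u k (l + 1) * ut k l = 0 :=
  fully_discrete_bilinear_to_MT_general a b f ft g gt h ht bil1 bil2 bil3 bil4 u v ut vt hu hv hut
    hvt
end

section
/- Let p₁, α₁, ξ₁₀ ∈ ℂ with p₁ ≠ 0 and p₁ + conj(p₁) ≠ 0, and let a ∈ ℝ, a ≠ 0, with 1 − a·p₁ ≠ 0 and 1 + a·conj(p₁) ≠ 0. Set ξ₁(t) = −t/p₁ + ξ₁₀ and ξ₁*(t) = −t/conj(p₁) + conj(ξ₁₀), and define for k ∈ ℤ, t ∈ ℝ: f_k(t) = 1 + (i·p₁·α₁·conj(α₁)/(p₁+conj(p₁))²)·((1−a·p₁)/(1+a·conj(p₁)))^{−k}·exp(ξ₁(t)+ξ₁*(t)); f̃_k(t) = 1 − (i·conj(p₁)·α₁·conj(α₁)/(p₁+conj(p₁))²)·((1−a·p₁)/(1+a·conj(p₁)))^{−k}·exp(ξ₁(t)+ξ₁*(t)); g_k(t) = (i·conj(α₁)/p₁)·(1−a·p₁)^{−k}·exp(ξ₁(t)); g̃_k(t) = −(i·α₁/conj(p₁))·(1+a·conj(p₁))^{k}·exp(ξ₁*(t));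 h_k(t) = conj(α₁)·(1−a·p₁)^{−k}·exp(ξ₁(t)); h̃_k(t) = α₁·(1+a·conj(p₁))^{k}·exp(ξ₁*(t)). Then for all k ∈ ℤ and t ∈ ℝ the semi-discrete bilinear system holds: (i/a)(g_{k+1} f_k − g_k f_{k+1}) + h_{k+1} f̃_k = 0; (i/a)(f_{k+1} f̃_k − f_k f̃_{k+1}) + h_{k+1} h̃_k = 0; i(h_k'(t) f̃_k(t) − h_k(t) f̃_k'(t)) + g_k(t) f_k(t) = 0; i(f_k'(t) f̃_k(t) − f_k(t) f̃_k'(t)) = g_k(t) g̃_k(t), where ' denotes d/dt. -/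
/-!
Write `q = conj p₁`, `β = conj α₁` and treat them as independent parameters. The tau functions
are built from the plane waves `X_k(t) = (1 - a p₁)^{-k} e^{ξ₁(t)}` and `Y_k(t) = (1 + a q)^k e^{ξ₁*(t)}`,
which satisfy the linear dispersion relations `X_{k+1} = X_k / (1 - a p₁)`, `Y_{k+1} = (1 + a q) Y_k`,
`X_k' = -X_k / p₁`, `Y_k' = -Y_k / q`. With `f = 1 + c p₁ X Y`, `f̃ = 1 - c q X Y`, `g`, `h` multiples of `X`
and `g̃`, `h̃` multiples of `Y`, each bilinear equation collapses to a rational identity in `X_k Y_k`;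
the only relation it needs is the normalisation `i c (p₁ + q)² = -α₁ β` of the coefficient `c`.
-/

open Complex

noncomputable def planeWave (r : ℂ) (ξ : ℝ → ℂ) (k : ℤ) (t : ℝ) : ℂ := r ^ k * exp (ξ t)

theorem planeWave_succ {r : ℂ} (hr : r ≠ 0) (ξ : ℝ → ℂ) (k : ℤ) (t : ℝ) :
    planeWave r ξ (k + 1) t = r * planeWave r ξ k t := by
  rw [planeWave, planeWave, zpow_add_one₀ hr]; ring

theorem hasDerivAt_planeWave {p ξ₀ : ℂ} {ξ : ℝ → ℂ} (hξ : ∀ t : ℝ, ξ t = -(t : ℂ) / p + ξ₀)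
    (r : ℂ) (k : ℤ) (t : ℝ) :
    HasDerivAt (planeWave r ξ k) (-planeWave r ξ k t / p) t := by
  have hξ' : HasDerivAt ξ (-1 / p) t := by
    rw [show ξ = fun t : ℝ => -(t : ℂ) / p + ξ₀ from funext hξ]
    simpa using (((hasDerivAt_id t).ofReal_comp).neg.div_const p).add_const ξ₀
  refine (hξ'.cexp.const_mul (r ^ k)).congr_deriv ?_
  rw [planeWave]; ring

theorem planeWave_inv_mul_planeWave (r s : ℂ) (ξ η : ℝ → ℂ) (k : ℤ) (t : ℝ) :
    planeWave r⁻¹ ξ k t * planeWave s η k t = (r / s) ^ (-k) * exp (ξ t + η t) := by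
  rw [planeWave, planeWave, zpow_neg, div_zpow, inv_div, inv_zpow, exp_add]; ring

section

variable {p q a c α β : ℂ} {X Y f ft g gt h ht : ℤ → ℝ → ℂ}

theorem bilinear_shift_eqs_of_planeWaves (hp : p ≠ 0) (ha : a ≠ 0) (h1 : 1 - a * p ≠ 0)
    (hc : I * c * (p + q) ^ 2 = -(α * β))
    (hX : ∀ k t, X (k + 1) t = (1 - a * p)⁻¹ * X k t)
    (hY : ∀ k t, Y (k + 1) t = (1 + a * q) * Y k t)
    (hf : ∀ k t, f k t = 1 + c * p * (X k t * Y k t))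
    (hft : ∀ k t, ft k t = 1 - c * q * (X k t * Y k t))
    (hg : ∀ k t, g k t = I * β / p * X k t)
    (hh : ∀ k t, h k t = β * X k t)
    (hht : ∀ k t, ht k t = α * Y k t) (k : ℤ) (t : ℝ) :
    I / a * (g (k + 1) t * f k t - g k t * f (k + 1) t) + h (k + 1) t * ft k t = 0 ∧
    I / a * (f (k + 1) t * ft k t - f k t * ft (k + 1) t) + h (k + 1) t * ht k t = 0 := by
  simp only [hf, hft, hg, hh, hht, hX, hY]
  constructor
  · field_simp
    linear_combination β * X k t * p * a * (1 - c * q * (X k t * Y k t)) * I_sq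
  · field_simp
    linear_combination a * X k t * Y k t * hc

theorem bilinear_deriv_eqs_of_planeWaves (hp : p ≠ 0) (hq : q ≠ 0)
    (hc : I * c * (p + q) ^ 2 = -(α * β))
    (hX : ∀ k t, HasDerivAt (X k) (-X k t / p) t)
    (hY : ∀ k t, HasDerivAt (Y k) (-Y k t / q) t)
    (hf : ∀ k t, f k t = 1 + c * p * (X k t * Y k t))
    (hft : ∀ k t, ft k t = 1 - c * q * (X k t * Y k t))
    (hg : ∀ k t, g k t = I * β / p * X k t)
    (hgt : ∀ k t, gt k t = -(I * α / q) * Y k t)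
    (hh : ∀ k t, h k t = β * X k t) (k : ℤ) (t : ℝ) :
    I * (deriv (h k) t * ft k t - h k t * deriv (ft k) t) + g k t * f k t = 0 ∧
    I * (deriv (f k) t * ft k t - f k t * deriv (ft k) t) = g k t * gt k t := by
  have hXY : HasDerivAt (fun s => X k s * Y k s) (-(1 / p + 1 / q) * (X k t * Y k t)) t :=
    ((hX k t).mul (hY k t)).congr_deriv (by ring)
  have dh : deriv (h k) t = β * (-X k t / p) := by
    rw [funext (hh k)]; exact ((hX k t).const_mul β).deriv
  have df : deriv (f k) t = c * p * (-(1 / p + 1 / q) * (X k t * Y k t)) := by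
    rw [funext (hf k)]; exact ((hXY.const_mul (c * p)).const_add 1).deriv
  have dft : deriv (ft k) t = -(c * q * (-(1 / p + 1 / q) * (X k t * Y k t))) := by
    rw [funext (hft k)]; exact ((hXY.const_mul (c * q)).const_sub 1).deriv
  rw [dh, df, dft, hf, hft, hg, hgt, hh]
  constructor
  · field_simp
    ring
  · field_simp
    linear_combination X k t * Y k t * I * hc - X k t * Y k t * c * (p + q) ^ 2 * I_sq

end

/-- The one-soliton tau functions satisfy the semi-discrete bilinear system of the
massive Thirring model. -/
theorem semi_discrete_MT_one_soliton_bilinear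
    (p₁ α₁ ξ₁₀ : ℂ) (hp : p₁ ≠ 0) (hps : p₁ + starRingEnd ℂ p₁ ≠ 0)
    (a : ℝ) (ha : a ≠ 0)
    (h1 : 1 - (a : ℂ) * p₁ ≠ 0) (h2 : 1 + (a : ℂ) * starRingEnd ℂ p₁ ≠ 0)
    (ξ ξs : ℝ → ℂ)
    (hξ : ∀ t : ℝ, ξ t = -(t : ℂ) / p₁ + ξ₁₀)
    (hξs : ∀ t : ℝ, ξs t = -(t : ℂ) / starRingEnd ℂ p₁ + starRingEnd ℂ ξ₁₀)
    (f ft g gt h ht : ℤ → ℝ → ℂ)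
    (hf : ∀ (k : ℤ) (t : ℝ), f k t =
      1 + (Complex.I * p₁ * α₁ * starRingEnd ℂ α₁ / (p₁ + starRingEnd ℂ p₁) ^ 2) *
        ((1 - (a : ℂ) * p₁) / (1 + (a : ℂ) * starRingEnd ℂ p₁)) ^ (-k) *
        Complex.exp (ξ t + ξs t))
    (hft : ∀ (k : ℤ) (t : ℝ), ft k t =
      1 - (Complex.I * starRingEnd ℂ p₁ * α₁ * starRingEnd ℂ α₁ /
          (p₁ + starRingEnd ℂ p₁) ^ 2) *
        ((1 - (a : ℂ) * p₁) / (1 + (a : ℂ) * starRingEnd ℂ p₁)) ^ (-k) *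
        Complex.exp (ξ t + ξs t))
    (hg : ∀ (k : ℤ) (t : ℝ), g k t =
      (Complex.I * starRingEnd ℂ α₁ / p₁) * (1 - (a : ℂ) * p₁) ^ (-k) * Complex.exp (ξ t))
    (hgt : ∀ (k : ℤ) (t : ℝ), gt k t =
      -(Complex.I * α₁ / starRingEnd ℂ p₁) * (1 + (a : ℂ) * starRingEnd ℂ p₁) ^ k *
        Complex.exp (ξs t))
    (hh : ∀ (k : ℤ) (t : ℝ), h k t =
      starRingEnd ℂ α₁ * (1 - (a : ℂ) * p₁) ^ (-k) * Complex.exp (ξ t))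
    (hht : ∀ (k : ℤ) (t : ℝ), ht k t =
      α₁ * (1 + (a : ℂ) * starRingEnd ℂ p₁) ^ k * Complex.exp (ξs t))
    :
    ∀ (k : ℤ) (t : ℝ),
      (Complex.I / (a : ℂ)) * (g (k + 1) t * f k t - g k t * f (k + 1) t)
        + h (k + 1) t * ft k t = 0 ∧
      (Complex.I / (a : ℂ)) * (f (k + 1) t * ft k t - f k t * ft (k + 1) t)
        + h (k + 1) t * ht k t = 0 ∧
      Complex.I * (deriv (h k) t * ft k t - h k t * deriv (ft k) t) + g k t * f k t = 0 ∧
      Complex.I * (deriv (f k) t * ft k t - f k t * deriv (ft k) t) = g k t * gt k t := by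
  intro k t
  set q := starRingEnd ℂ p₁
  set c := I * α₁ * starRingEnd ℂ α₁ / (p₁ + q) ^ 2
  set X := planeWave (1 - (a : ℂ) * p₁)⁻¹ ξ
  set Y := planeWave (1 + (a : ℂ) * q) ξs
  have hc : I * c * (p₁ + q) ^ 2 = -(α₁ * starRingEnd ℂ α₁) := by
    simp only [c]
    field_simp
    linear_combination α₁ * starRingEnd ℂ α₁ * I_sq
  have hX : ∀ k t, X k t = (1 - (a : ℂ) * p₁) ^ (-k) * exp (ξ t) := fun k t => by
    simp only [X, planeWave, inv_zpow']
  have hY : ∀ k t, Y k t = (1 + (a : ℂ) * q) ^ k * exp (ξs t) := fun _ _ => rfl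
  have hf' : ∀ k t, f k t = 1 + c * p₁ * (X k t * Y k t) := fun k t => by
    rw [hf, planeWave_inv_mul_planeWave]; ring
  have hft' : ∀ k t, ft k t = 1 - c * q * (X k t * Y k t) := fun k t => by
    rw [hft, planeWave_inv_mul_planeWave]; ring
  have hg' : ∀ k t, g k t = I * starRingEnd ℂ α₁ / p₁ * X k t := fun k t => by rw [hg, hX]; ring
  have hh' : ∀ k t, h k t = starRingEnd ℂ α₁ * X k t := fun k t => by rw [hh, hX]; ring
  have hgt' : ∀ k t, gt k t = -(I * α₁ / q) * Y k t := fun k t => by rw [hgt, hY]; ring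
  have hht' : ∀ k t, ht k t = α₁ * Y k t := fun k t => by rw [hht, hY]; ring
  obtain ⟨shift_gf, shift_ff⟩ := bilinear_shift_eqs_of_planeWaves hp (ofReal_ne_zero.mpr ha) h1 hc
    (planeWave_succ (inv_ne_zero h1) ξ) (planeWave_succ h2 ξs) hf' hft' hg' hh' hht' k t
  obtain ⟨deriv_hf, deriv_ff⟩ := bilinear_deriv_eqs_of_planeWaves hp ((map_ne_zero _).mpr hp) hc
    (hasDerivAt_planeWave hξ _) (hasDerivAt_planeWave hξs _) hf' hft' hg' hgt' hh' k t
  exact ⟨shift_gf, shift_ff, deriv_hf, deriv_ff⟩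
end

section
/- Let p₁ ∈ ℂ with p₁ ≠ 0 and p₁ + conj(p₁) ≠ 0, and let a, b ∈ ℝ be nonzero with 1 − a·p₁ ≠ 0, 1 + a·conj(p₁) ≠ 0, 1 + b/p₁ ≠ 0, 1 − b/conj(p₁) ≠ 0. For k, l ∈ ℤ define E(k,l) = ((1−a·p₁)/(1+a·conj(p₁)))^{−k}·((1+b/p₁)/(1−b/conj(p₁)))^{−l} and set f^l_k = 1 + (i·p₁/(p₁+conj(p₁))²)·E(k,l); f̃^l_k = 1 − (i·conj(p₁)/(p₁+conj(p₁))²)·E(k,l); g^l_k = (i/p₁)·(1−a·p₁)^{−k}·(1+b/p₁)^{−l}; g̃^l_k = −(i/conj(p₁))·(1+a·conj(p₁))^{k}·(1−b/conj(p₁))^{l}; h^l_k = (1−a·p₁)^{−k}·(1+b/p₁)^{−l}; h̃^l_k = (1+a·conj(p₁))^{k}·(1−b/conj(p₁))^{l}. Then for all k, l ∈ ℤ the fully discrete bilinear system holds: (i/a)(g^l_{k+1} f^l_k − g^l_k f^l_{k+1}) + h^l_{k+1} f̃^l_k = 0; (i/a)(f^l_{k+1} f̃^l_k − f^l_k f̃^l_{k+1})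 + h^l_{k+1} h̃^l_k = 0; (i/b)(h^{l+1}_k f̃^l_k − h^l_k f̃^{l+1}_k) + g^{l+1}_k f^l_k = 0; (i/b)(f^{l+1}_k f̃^l_k − f^l_k f̃^{l+1}_k) = g^{l+1}_k g̃^l_k. -/
/-!
Write `h = (1 - a p)^{-k} (1 + b/p)^{-l}` and `h̃ = (1 + a q)^k (1 - b/q)^l` with `q = conj p`,
so that `E = h h̃`, `f = 1 + c E`, `f̃ = 1 - d E`, `g = (i/p) h`, `g̃ = -(i/q) h̃` with
`c = i p/(p+q)²`, `d = i q/(p+q)²`. A step in `k` divides `h` by `1 - a p` and multiplies `h̃` by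
`1 + a q`; a step in `l` divides `h` by `1 + b/p` and multiplies `h̃` by `1 - b/q`. After these
substitutions each bilinear equation is a rational identity resting on `q c = p d` (first and third
equations) and `c + d = i/(p+q)` (second and fourth).
-/

namespace FullyDiscreteMT

open Complex

noncomputable section

variable (p q a b : ℂ)

def h (k l : ℤ) : ℂ := (1 - a * p) ^ (-k) * (1 + b / p) ^ (-l)

def ht (k l : ℤ) : ℂ := (1 + a * q) ^ k * (1 - b / q) ^ l

def f (k l : ℤ) : ℂ := 1 + I * p / (p + q) ^ 2 * (h p a b k l * ht q a b k l)

def ft (k l : ℤ) : ℂ := 1 - I * q / (p + q) ^ 2 * (h p a b k l * ht q a b k l)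

def g (k l : ℤ) : ℂ := I / p * h p a b k l

def gt (k l : ℤ) : ℂ := -(I / q) * ht q a b k l

end

variable {p q a b : ℂ} (k l : ℤ)

theorem h_mul_ht : h p a b k l * ht q a b k l =
    ((1 - a * p) / (1 + a * q)) ^ (-k) * ((1 + b / p) / (1 - b / q)) ^ (-l) := by
  simp only [h, ht, div_zpow, zpow_neg, inv_div]
  ring

theorem h_add_one_k (hA : 1 - a * p ≠ 0) : h p a b (k + 1) l = h p a b k l / (1 - a * p) := by
  rw [h, h, neg_add, zpow_add₀ hA, zpow_neg_one, div_eq_mul_inv]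
  ring

theorem h_add_one_l (hC : 1 + b / p ≠ 0) : h p a b k (l + 1) = h p a b k l / (1 + b / p) := by
  rw [h, h, neg_add, zpow_add₀ hC, zpow_neg_one, div_eq_mul_inv]
  ring

theorem ht_add_one_k (hB : 1 + a * q ≠ 0) : ht q a b (k + 1) l = ht q a b k l * (1 + a * q) := by
  rw [ht, ht, zpow_add_one₀ hB]
  ring

theorem ht_add_one_l (hD : 1 - b / q ≠ 0) : ht q a b k (l + 1) = ht q a b k l * (1 - b / q) := by
  rw [ht, ht, zpow_add_one₀ hD]
  ring

theorem bilinear_g_f_k (ha : a ≠ 0) (hp : p ≠ 0) (hA : 1 - a * p ≠ 0) (hB : 1 + a * q ≠ 0) :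
    I / a * (g p a b (k + 1) l * f p q a b k l - g p a b k l * f p q a b (k + 1) l)
      + h p a b (k + 1) l * ft p q a b k l = 0 := by
  simp only [g, f, ft, h_add_one_k k l hA, ht_add_one_k k l hB]
  grind [I_sq]

theorem bilinear_f_ft_k (ha : a ≠ 0) (hs : p + q ≠ 0) (hA : 1 - a * p ≠ 0)
    (hB : 1 + a * q ≠ 0) :
    I / a * (f p q a b (k + 1) l * ft p q a b k l - f p q a b k l * ft p q a b (k + 1) l)
      + h p a b (k + 1) l * ht q a b k l = 0 := by
  simp only [f, ft, h_add_one_k k l hA, ht_add_one_k k l hB]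
  grind [I_sq]

theorem bilinear_h_ft_l (hb : b ≠ 0) (hp : p ≠ 0) (hq : q ≠ 0) (hC : 1 + b / p ≠ 0)
    (hD : 1 - b / q ≠ 0) :
    I / b * (h p a b k (l + 1) * ft p q a b k l - h p a b k l * ft p q a b k (l + 1))
      + g p a b k (l + 1) * f p q a b k l = 0 := by
  simp only [g, f, ft, h_add_one_l k l hC, ht_add_one_l k l hD]
  grind [I_sq]

theorem bilinear_f_ft_l (hb : b ≠ 0) (hp : p ≠ 0) (hq : q ≠ 0) (hs : p + q ≠ 0)
    (hC : 1 + b / p ≠ 0) (hD : 1 - b / q ≠ 0) :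
    I / b * (f p q a b k (l + 1) * ft p q a b k l - f p q a b k l * ft p q a b k (l + 1))
      = g p a b k (l + 1) * gt q a b k l := by
  simp only [g, gt, f, ft, h_add_one_l k l hC, ht_add_one_l k l hD]
  grind [I_sq, pow_ne_zero 2 hs]

end FullyDiscreteMT

/-- The one-soliton tau functions satisfy the fully discrete bilinear system of the
massive Thirring model. -/
theorem fully_discrete_MT_one_soliton_bilinear
    (p₁ : ℂ) (hp : p₁ ≠ 0) (hps : p₁ + starRingEnd ℂ p₁ ≠ 0)
    (a b : ℝ) (ha : a ≠ 0) (hb : b ≠ 0)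
    (h1 : 1 - (a : ℂ) * p₁ ≠ 0) (h2 : 1 + (a : ℂ) * starRingEnd ℂ p₁ ≠ 0)
    (h3 : 1 + (b : ℂ) / p₁ ≠ 0) (h4 : 1 - (b : ℂ) / starRingEnd ℂ p₁ ≠ 0)
    (E : ℤ → ℤ → ℂ)
    (hE : ∀ k l : ℤ, E k l =
      ((1 - (a : ℂ) * p₁) / (1 + (a : ℂ) * starRingEnd ℂ p₁)) ^ (-k) *
      ((1 + (b : ℂ) / p₁) / (1 - (b : ℂ) / starRingEnd ℂ p₁)) ^ (-l))
    (f ft g gt h ht : ℤ → ℤ → ℂ)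
    (hf : ∀ k l : ℤ, f k l =
      1 + (Complex.I * p₁ / (p₁ + starRingEnd ℂ p₁) ^ 2) * E k l)
    (hft : ∀ k l : ℤ, ft k l =
      1 - (Complex.I * starRingEnd ℂ p₁ / (p₁ + starRingEnd ℂ p₁) ^ 2) * E k l)
    (hg : ∀ k l : ℤ, g k l =
      (Complex.I / p₁) * (1 - (a : ℂ) * p₁) ^ (-k) * (1 + (b : ℂ) / p₁) ^ (-l))
    (hgt : ∀ k l : ℤ, gt k l =
      -(Complex.I / starRingEnd ℂ p₁) * (1 + (a : ℂ) * starRingEnd ℂ p₁) ^ k *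
        (1 - (b : ℂ) / starRingEnd ℂ p₁) ^ l)
    (hh : ∀ k l : ℤ, h k l =
      (1 - (a : ℂ) * p₁) ^ (-k) * (1 + (b : ℂ) / p₁) ^ (-l))
    (hht : ∀ k l : ℤ, ht k l =
      (1 + (a : ℂ) * starRingEnd ℂ p₁) ^ k * (1 - (b : ℂ) / starRingEnd ℂ p₁) ^ l)
    :
    ∀ k l : ℤ,
      (Complex.I / (a : ℂ)) * (g (k + 1) l * f k l - g k l * f (k + 1) l)
        + h (k + 1) l * ft k l = 0 ∧
      (Complex.I / (a : ℂ)) * (f (k + 1) l * ft k l - f k l * ft (k + 1) l)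
        + h (k + 1) l * ht k l = 0 ∧
      (Complex.I / (b : ℂ)) * (h k (l + 1) * ft k l - h k l * ft k (l + 1))
        + g k (l + 1) * f k l = 0 ∧
      (Complex.I / (b : ℂ)) * (f k (l + 1) * ft k l - f k l * ft k (l + 1))
        = g k (l + 1) * gt k l := by
  have hq : starRingEnd ℂ p₁ ≠ 0 := (map_ne_zero _).2 hp
  have haC : (a : ℂ) ≠ 0 := Complex.ofReal_ne_zero.2 ha
  have hbC : (b : ℂ) ≠ 0 := Complex.ofReal_ne_zero.2 hb
  obtain rfl : E = fun k l =>
      FullyDiscreteMT.h p₁ a b k l * FullyDiscreteMT.ht (starRingEnd ℂ p₁) a b k l :=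
    funext₂ fun k l => by rw [hE, FullyDiscreteMT.h_mul_ht]
  obtain rfl : f = FullyDiscreteMT.f p₁ (starRingEnd ℂ p₁) a b := funext₂ hf
  obtain rfl : ft = FullyDiscreteMT.ft p₁ (starRingEnd ℂ p₁) a b := funext₂ hft
  obtain rfl : g = FullyDiscreteMT.g p₁ a b := funext₂ fun k l => by
    rw [hg, FullyDiscreteMT.g, FullyDiscreteMT.h, mul_assoc]
  obtain rfl : gt = FullyDiscreteMT.gt (starRingEnd ℂ p₁) a b := funext₂ fun k l => by
    rw [hgt, FullyDiscreteMT.gt, FullyDiscreteMT.ht, mul_assoc]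
  obtain rfl : h = FullyDiscreteMT.h p₁ a b := funext₂ hh
  obtain rfl : ht = FullyDiscreteMT.ht (starRingEnd ℂ p₁) a b := funext₂ hht
  intro k l
  exact ⟨FullyDiscreteMT.bilinear_g_f_k k l haC hp h1 h2,
    FullyDiscreteMT.bilinear_f_ft_k k l haC hps h1 h2,
    FullyDiscreteMT.bilinear_h_ft_l k l hbC hp hq h3 h4,
    FullyDiscreteMT.bilinear_f_ft_l k l hbC hp hq hps h3 h4⟩
end

section
/- Let p₁ ∈ ℂ with p₁ ≠ 0 and p₁ + conj(p₁) ≠ 0, and let a, b ∈ ℝ be nonzero with 1 − a·p₁ ≠ 0, 1 + a·conj(p₁) ≠ 0, 1 + b/p₁ ≠ 0, 1 − b/conj(p₁) ≠ 0. With E(k,l) = ((1−a·p₁)/(1+a·conj(p₁)))^{−k}·((1+b/p₁)/(1−b/conj(p₁)))^{−l}, define f^l_k = 1 + (i·p₁/(p₁+conj(p₁))²)·E(k,l), f̃^l_k = 1 − (i·conj(p₁)/(p₁+conj(p₁))²)·E(k,l), g^l_k = (i/p₁)·(1−a·p₁)^{−k}·(1+b/p₁)^{−l}, g̃^l_k =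 −(i/conj(p₁))·(1+a·conj(p₁))^{k}·(1−b/conj(p₁))^{l}, h^l_k = (1−a·p₁)^{−k}·(1+b/p₁)^{−l}, h̃^l_k = (1+a·conj(p₁))^{k}·(1−b/conj(p₁))^{l}, and put u^l_k = g^l_k/f̃^l_k, v^l_k = h^l_k/f^l_k, ũ^l_k = g̃^l_k/f^l_k, ṽ^l_k = h̃^l_k/f̃^l_k. Then for all k, l ∈ ℤ at which f^l_k, f̃^l_k, f^l_{k+1}, f̃^l_{k+1}, f^{l+1}_k, f̃^{l+1}_k are all nonzero: (i/a)(u^l_{k+1} − u^l_k) + v^l_{k+1} + u^l_{k+1} v^l_{k+1} ṽ^l_k = 0 and (i/b)(v^{l+1}_k − v^l_k) + u^{l+1}_k + v^{l+1}_k u^{l+1}_k ũ^l_k = 0. -/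
/-!
Write `α = 1 - a p`, `β = 1 + a q`, `γ = 1 + b / p`, `δ = 1 - b / q` with `q = conj p`. Then
`E = h · h̃`, a step in `k` multiplies `h` by `α⁻¹` and `h̃` by `β`, and a step in `l` multiplies
them by `γ⁻¹` and `δ`. Clearing the denominators of either equation leaves a trilinear identity in
`g, h, h̃, f, f̃`; dividing out a factor of `h` turns it into a bilinear identity in `f, f̃`, which holds
because `p β + q α = p + q` (respectively `q δ + p γ = p + q`).
-/

open Complex

theorem soliton_bilinear {R : Type*} [CommRing R] {p q w α β E : R}
    (hαβ : p * β + q * α = p + q) :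
    p * (α - w * q * β * E) * (1 - w * q * E) - (p + w * q ^ 2 * E) * (α + w * p * β * E)
      + w * (p + q) ^ 2 * E = 0 := by
  linear_combination (-(w * (p + q) * E)) * hαβ

theorem soliton_trilinear_k {p q a w α β X Y : ℂ} (hp : p ≠ 0) (ha : a ≠ 0) (hα : α ≠ 0)
    (hαa : α = 1 - a * p) (hβa : β = 1 + a * q) (hw : w * (p + q) ^ 2 = I) :
    I / a * (I / p * (X / α) * (1 - w * q * (X * Y)) - I / p * X * (1 - w * q * (X / α * (β * Y))))
        * (1 + w * p * (X / α * (β * Y)))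
      + X / α * (1 - w * q * (X / α * (β * Y))) * (1 - w * q * (X * Y))
      + I / p * (X / α) * (X / α) * Y = 0 := by
  have hB := soliton_bilinear (p := p) (q := q) (w := w) (α := α) (β := β) (E := X * Y)
    (by linear_combination p * hβa + q * hαa)
  field_simp
  -- the cleared goal is `X a` times `hB`, modulo `i² = -1` and the definitions of `α, β`
  linear_combination X * a * hB - X * a * (X * Y) * hw
    + X * (a * (p + w * q ^ 2 * (X * Y))) * (α + w * p * β * (X * Y)) * I_sq
    + X * I ^ 2 * (α + w * p * β * (X * Y)) * (w * q * (X * Y) * hβa - hαa)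

theorem soliton_trilinear_l {p q b w γ δ X Y : ℂ} (hp : p ≠ 0) (hq : q ≠ 0) (hb : b ≠ 0)
    (hγ : γ ≠ 0) (hγb : p * γ = p + b) (hδb : q * δ = q - b) (hw : w * (p + q) ^ 2 = I) :
    I / b * (X / γ * (1 + w * p * (X * Y)) - X * (1 + w * p * (X / γ * (δ * Y))))
        * (1 - w * q * (X / γ * (δ * Y)))
      + I / p * (X / γ) * (1 + w * p * (X / γ * (δ * Y))) * (1 + w * p * (X * Y))
      + X / γ * (I / p * (X / γ)) * (-(I / q) * Y) = 0 := by
  -- swapping `p, q` and negating `w` exchanges `f` and `f̃`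
  have hB := soliton_bilinear (p := q) (q := p) (w := -w) (α := γ) (β := δ) (E := X * Y)
    (by linear_combination hδb + hγb)
  field_simp
  linear_combination I * X * b * hB + I * X * b * (X * Y) * hw
    - I * X * (γ - w * q * δ * (X * Y)) * (q * hγb + p ^ 2 * w * (X * Y) * hδb)

theorem thirring_step_of_trilinear {K : Type*} [Field K] {c x x' y' z d d' e' : K}
    (hd : d ≠ 0) (hd' : d' ≠ 0) (he' : e' ≠ 0)
    (hT : c * (x' * d - x * d') * e' + y' * d' * d + x' * y' * z = 0) :
    c * (x' / d' - x / d) + y' / e' + x' / d' * (y' / e') * (z / d) = 0 := by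
  field_simp
  linear_combination hT

/-- The one-soliton formulas solve the fully discrete massive Thirring model. -/
theorem fully_discrete_MT_one_soliton
    (p₁ : ℂ) (hp : p₁ ≠ 0) (hps : p₁ + starRingEnd ℂ p₁ ≠ 0)
    (a b : ℝ) (ha : a ≠ 0) (hb : b ≠ 0)
    (h1 : 1 - (a : ℂ) * p₁ ≠ 0) (h2 : 1 + (a : ℂ) * starRingEnd ℂ p₁ ≠ 0)
    (h3 : 1 + (b : ℂ) / p₁ ≠ 0) (h4 : 1 - (b : ℂ) / starRingEnd ℂ p₁ ≠ 0)
    (E : ℤ → ℤ → ℂ)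
    (hE : ∀ k l : ℤ, E k l =
      ((1 - (a : ℂ) * p₁) / (1 + (a : ℂ) * starRingEnd ℂ p₁)) ^ (-k) *
      ((1 + (b : ℂ) / p₁) / (1 - (b : ℂ) / starRingEnd ℂ p₁)) ^ (-l))
    (f ft g gt h ht : ℤ → ℤ → ℂ)
    (hf : ∀ k l : ℤ, f k l =
      1 + (Complex.I * p₁ / (p₁ + starRingEnd ℂ p₁) ^ 2) * E k l)
    (hft : ∀ k l : ℤ, ft k l =
      1 - (Complex.I * starRingEnd ℂ p₁ / (p₁ + starRingEnd ℂ p₁) ^ 2) * E k l)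
    (hg : ∀ k l : ℤ, g k l =
      (Complex.I / p₁) * (1 - (a : ℂ) * p₁) ^ (-k) * (1 + (b : ℂ) / p₁) ^ (-l))
    (hgt : ∀ k l : ℤ, gt k l =
      -(Complex.I / starRingEnd ℂ p₁) * (1 + (a : ℂ) * starRingEnd ℂ p₁) ^ k *
        (1 - (b : ℂ) / starRingEnd ℂ p₁) ^ l)
    (hh : ∀ k l : ℤ, h k l =
      (1 - (a : ℂ) * p₁) ^ (-k) * (1 + (b : ℂ) / p₁) ^ (-l))
    (hht : ∀ k l : ℤ, ht k l =
      (1 + (a : ℂ) * starRingEnd ℂ p₁) ^ k * (1 - (b : ℂ) / starRingEnd ℂ p₁) ^ l)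
    (u v ut vt : ℤ → ℤ → ℂ)
    (hu : ∀ k l, u k l = g k l / ft k l)
    (hv : ∀ k l, v k l = h k l / f k l)
    (hut : ∀ k l, ut k l = gt k l / f k l)
    (hvt : ∀ k l, vt k l = ht k l / ft k l) :
    ∀ k l : ℤ, f k l ≠ 0 → ft k l ≠ 0 → f (k + 1) l ≠ 0 → ft (k + 1) l ≠ 0 →
      f k (l + 1) ≠ 0 → ft k (l + 1) ≠ 0 →
      (Complex.I / (a : ℂ)) * (u (k + 1) l - u k l) + v (k + 1) l
        + u (k + 1) l * v (k + 1) l * vt k l = 0 ∧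
      (Complex.I / (b : ℂ)) * (v k (l + 1) - v k l) + u k (l + 1)
        + v k (l + 1) * u k (l + 1) * ut k l = 0 := by
  intro k l hf0 hft0 hf10 hft10 hfl0 hftl0
  set q := starRingEnd ℂ p₁
  set w := I / (p₁ + q) ^ 2
  have hq : q ≠ 0 := (map_ne_zero _).mpr hp
  have hw : w * (p₁ + q) ^ 2 = I := div_mul_cancel₀ _ (pow_ne_zero 2 hps)
  have hhk : ∀ k l, h (k + 1) l = h k l / (1 - a * p₁) := fun k l => by
    rw [hh, hh, neg_add', zpow_sub_one₀ h1]; ring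
  have hhl : ∀ k l, h k (l + 1) = h k l / (1 + b / p₁) := fun k l => by
    rw [hh, hh, neg_add', zpow_sub_one₀ h3]; ring
  have hhtk : ∀ k l, ht (k + 1) l = (1 + a * q) * ht k l := fun k l => by
    rw [hht, hht, zpow_add_one₀ h2]; ring
  have hhtl : ∀ k l, ht k (l + 1) = (1 - b / q) * ht k l := fun k l => by
    rw [hht, hht, zpow_add_one₀ h4]; ring
  have hgh : ∀ k l, g k l = I / p₁ * h k l := fun k l => by rw [hg, hh]; ring
  have hgth : ∀ k l, gt k l = -(I / q) * ht k l := fun k l => by rw [hgt, hht]; ring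
  have hfh : ∀ k l, f k l = 1 + w * p₁ * (h k l * ht k l) := fun k l => by
    simp only [hf, hE, hh, hht, div_zpow, zpow_neg, inv_div]; ring
  have hfth : ∀ k l, ft k l = 1 - w * q * (h k l * ht k l) := fun k l => by
    simp only [hft, hE, hh, hht, div_zpow, zpow_neg, inv_div]; ring
  constructor
  · rw [hu, hu, hv, hvt]
    refine thirring_step_of_trilinear hft0 hft10 hf10 ?_
    simp only [hgh, hfh, hfth, hhk, hhtk]
    exact soliton_trilinear_k hp (ofReal_ne_zero.mpr ha) h1 rfl rfl hw
  · rw [hv, hv, hu, hut]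
    refine thirring_step_of_trilinear hf0 hfl0 hftl0 ?_
    simp only [hgh, hgth, hfh, hfth, hhl, hhtl]
    exact soliton_trilinear_l hp hq (ofReal_ne_zero.mpr hb) h3 (by field_simp)
      (by field_simp) hw
end

section
/- Let N ≥ 1, let p_1,…,p_N ∈ ℂ be nonzero with p_i + conj(p_j) ≠ 0 for all i,j, let μ, ν, ξ_{i0}, ξ̄_{j0}, η_{i0}, η̄_{j0} ∈ ℂ, let a ∈ ℝ, a ≠ 0, with 1 − a·p_i ≠ 0 and 1 + a·conj(p_i) ≠ 0 for all i, and let x₋₁, y₋₁ ∈ ℝ. Set ξ_i = x₋₁/p_i + ξ_{i0}, ξ̄_j = x₋₁/conj(p_j) + ξ̄_{j0}, η_i = y₋₁/conj(p_i) + η_{i0}, η̄_j = y₋₁/p_j + η̄_{j0}. For n, k₁, m, k₂ ∈ ℤ define the N×N matrices A(n,k₁) with (i,j) entry (μ·conj(p_j)/(p_i+conj(p_j)))·(−p_i/conj(p_j))^n·((1−a·p_i)/(1+a·conj(p_j)))^{−k₁}·exp(ξ_i+ξ̄_j) and B(m,k₂) with (i,j) entry (ν/(conj(p_i)+p_j))·(−conj(p_i)/p_j)^m·((1+a·conj(p_i))/(1−a·p_j))^{−k₂}·exp(η_i+η̄_j),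 and set f^{m,k₂}_{n,k₁} = det[[A(n,k₁), I],[−I, B(m,k₂)]]. Then for all n, k₁, m, k₂ ∈ ℤ: f^{m+1,k₂}_{n+1,k₁} = f^{m,k₂}_{n,k₁}. -/
/-! Raising `n` by one multiplies `A(n,k₁)` entrywise by `(-p i) / conj (p j)`, and raising `m`
by one multiplies `B(m,k₂)` entrywise by `conj (p i) / (-p j)`. Both shifts together are the
conjugation `[[A, I], [-I, B]] ↦ D [[A, I], [-I, B]] E` with `D = diag(-p, conj p)` and
`E = diag(conj p, -p)⁻¹`, which preserves the identity blocks, and `det D · det E = 1`. -/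

open Matrix

/-- Determinant of the 2N×2N block matrix `[[A, I], [−I, B]]`. -/
noncomputable def blockDet {N : ℕ} (A B : Matrix (Fin N) (Fin N) ℂ) : ℂ :=
  (Matrix.fromBlocks A (1 : Matrix (Fin N) (Fin N) ℂ)
    (-1 : Matrix (Fin N) (Fin N) ℂ) B).det

/-- Determinant of the bordered (2N+1)×(2N+1) matrix obtained from the block matrix
`[[A, I], [−I, B]]` by appending the column vector `col` on the right and the row
vector `row` at the bottom, with `0` in the corner. -/
noncomputable def borderedDet {N : ℕ} (A B : Matrix (Fin N) (Fin N) ℂ)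
    (col row : (Fin N ⊕ Fin N) → ℂ) : ℂ :=
  (Matrix.fromBlocks
    (Matrix.fromBlocks A (1 : Matrix (Fin N) (Fin N) ℂ)
      (-1 : Matrix (Fin N) (Fin N) ℂ) B)
    (Matrix.of fun i (_ : Fin 1) => col i)
    (Matrix.of fun (_ : Fin 1) j => row j)
    (0 : Matrix (Fin 1) (Fin 1) ℂ)).det

theorem det_fromBlocks_one_neg_one_rescale {K ι : Type*} [Field K] [Fintype ι] [DecidableEq ι]
    (d f : ι → K) (hd : ∀ i, d i ≠ 0) (hf : ∀ i, f i ≠ 0) (A B : Matrix ι ι K) :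
    (fromBlocks (of fun i j => d i * A i j / f j) 1 (-1) (of fun i j => f i * B i j / d j)).det
      = (fromBlocks A 1 (-1) B).det := by
  have factor : fromBlocks (of fun i j => d i * A i j / f j) 1 (-1)
        (of fun i j => f i * B i j / d j)
      = fromBlocks (diagonal d) 0 0 (diagonal f) * fromBlocks A 1 (-1) B
        * fromBlocks (diagonal f⁻¹) 0 0 (diagonal d⁻¹) := by
    rw [fromBlocks_multiply, fromBlocks_multiply]
    congr 1 <;> ext i j <;> by_cases h : i = j <;> simp [h, one_apply, div_eq_mul_inv, hd, hf]
  rw [factor, det_mul, det_mul, det_fromBlocks_zero₁₂, det_fromBlocks_zero₁₂]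
  simp only [det_diagonal, Pi.inv_apply, Finset.prod_inv_distrib]
  have hd' : ∏ i, d i ≠ 0 := Finset.prod_ne_zero_iff.mpr fun i _ => hd i
  have hf' : ∏ i, f i ≠ 0 := Finset.prod_ne_zero_iff.mpr fun i _ => hf i
  field_simp

theorem period2_reduction_f_general (N : ℕ) (p : Fin N → ℂ) (hp : ∀ i, p i ≠ 0) (μ ν : ℂ) (a : ℝ)
    (ξ ξb η ηb : Fin N → ℂ)
    (A : ℤ → ℤ → Matrix (Fin N) (Fin N) ℂ)
    (hA : ∀ n k₁ i j, A n k₁ i j =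
      (μ * starRingEnd ℂ (p j) / (p i + starRingEnd ℂ (p j))) *
      (-(p i) / starRingEnd ℂ (p j)) ^ n *
      ((1 - (a : ℂ) * p i) / (1 + (a : ℂ) * starRingEnd ℂ (p j))) ^ (-k₁) *
      Complex.exp (ξ i + ξb j))
    (B : ℤ → ℤ → Matrix (Fin N) (Fin N) ℂ)
    (hB : ∀ m k₂ i j, B m k₂ i j =
      (ν / (starRingEnd ℂ (p i) + p j)) *
      (-(starRingEnd ℂ (p i)) / p j) ^ m *
      ((1 + (a : ℂ) * starRingEnd ℂ (p i)) / (1 - (a : ℂ) * p j)) ^ (-k₂) *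
      Complex.exp (η i + ηb j))
    (f : ℤ → ℤ → ℤ → ℤ → ℂ)
    (hf : ∀ m k₂ n k₁, f m k₂ n k₁ = blockDet (A n k₁) (B m k₂)) :
    ∀ n k₁ m k₂ : ℤ, f (m + 1) k₂ (n + 1) k₁ = f m k₂ n k₁ := by
  intro n k₁ m k₂
  have hp' : ∀ i, starRingEnd ℂ (p i) ≠ 0 := fun i => (map_ne_zero _).mpr (hp i)
  have hA_succ : A (n + 1) k₁ = of fun i j => -p i * A n k₁ i j / starRingEnd ℂ (p j) := by
    ext i j
    rw [of_apply, hA, hA, zpow_add_one₀ (div_ne_zero (neg_ne_zero.mpr (hp i)) (hp' j))]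
    ring
  have hB_succ : B (m + 1) k₂ = of fun i j => starRingEnd ℂ (p i) * B m k₂ i j / -p j := by
    ext i j
    rw [of_apply, hB, hB, zpow_add_one₀ (div_ne_zero (neg_ne_zero.mpr (hp' i)) (hp j))]
    ring
  rw [hf, hf, hA_succ, hB_succ, blockDet, blockDet,
    det_fromBlocks_one_neg_one_rescale _ _ (fun i => neg_ne_zero.mpr (hp i)) hp']

/-- Period-2 reduction identity `f^{m+1,k₂}_{n+1,k₁} = f^{m,k₂}_{n,k₁}` for the Gram-type
tau functions of the two-component KP–Toda hierarchy after the reduction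
`q_i = conj(p_i)`, `q̄_i = p_i`, `a₁ = −a₂ = a`. -/
theorem period2_reduction_f (N : ℕ) (hN : 1 ≤ N)
    (p : Fin N → ℂ) (hp : ∀ i, p i ≠ 0)
    (hpp : ∀ i j, p i + starRingEnd ℂ (p j) ≠ 0)
    (μ ν : ℂ) (ξ0 ξb0 η0 ηb0 : Fin N → ℂ)
    (a : ℝ) (ha : a ≠ 0)
    (h1 : ∀ i, 1 - (a : ℂ) * p i ≠ 0)
    (h2 : ∀ i, 1 + (a : ℂ) * starRingEnd ℂ (p i) ≠ 0)
    (x y : ℝ)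
    (ξ ξb η ηb : Fin N → ℂ)
    (hξ : ∀ i, ξ i = (x : ℂ) / p i + ξ0 i)
    (hξb : ∀ j, ξb j = (x : ℂ) / starRingEnd ℂ (p j) + ξb0 j)
    (hη : ∀ i, η i = (y : ℂ) / starRingEnd ℂ (p i) + η0 i)
    (hηb : ∀ j, ηb j = (y : ℂ) / p j + ηb0 j)
    (A : ℤ → ℤ → Matrix (Fin N) (Fin N) ℂ)
    (hA : ∀ n k₁ i j, A n k₁ i j =
      (μ * starRingEnd ℂ (p j) / (p i + starRingEnd ℂ (p j))) *
      (-(p i) / starRingEnd ℂ (p j)) ^ n *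
      ((1 - (a : ℂ) * p i) / (1 + (a : ℂ) * starRingEnd ℂ (p j))) ^ (-k₁) *
      Complex.exp (ξ i + ξb j))
    (B : ℤ → ℤ → Matrix (Fin N) (Fin N) ℂ)
    (hB : ∀ m k₂ i j, B m k₂ i j =
      (ν / (starRingEnd ℂ (p i) + p j)) *
      (-(starRingEnd ℂ (p i)) / p j) ^ m *
      ((1 + (a : ℂ) * starRingEnd ℂ (p i)) / (1 - (a : ℂ) * p j)) ^ (-k₂) *
      Complex.exp (η i + ηb j))
    (f : ℤ → ℤ → ℤ → ℤ → ℂ)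
    (hf : ∀ m k₂ n k₁, f m k₂ n k₁ = blockDet (A n k₁) (B m k₂)) :
    ∀ n k₁ m k₂ : ℤ, f (m + 1) k₂ (n + 1) k₁ = f m k₂ n k₁ :=
  period2_reduction_f_general N p hp μ ν a ξ ξb η ηb A hA B hB f hf
end

section
/- Let N ≥ 1, let p_1,…,p_N ∈ ℂ be nonzero with p_i + conj(p_j) ≠ 0 for all i,j, let μ, ν, ξ_{i0}, ξ̄_{j0}, η_{i0}, η̄_{j0} ∈ ℂ, let a ∈ ℝ, a ≠ 0, with 1 − a·p_i ≠ 0 and 1 + a·conj(p_i) ≠ 0 for all i, and let x₋₁, y₋₁ ∈ ℝ. Set ξ_i = x₋₁/p_i + ξ_{i0}, ξ̄_j = x₋₁/conj(p_j) + ξ̄_{j0}, η_i = y₋₁/conj(p_i) + η_{i0}, η̄_j = y₋₁/p_j + η̄_{j0}. For n, k₁, m, k₂ ∈ ℤ define the N×N matrices A(n,k₁) with (i,j) entry (μ·conj(p_j)/(p_i+conj(p_j)))·(−p_i/conj(p_j))^n·((1−a·p_i)/(1+a·conj(p_j)))^{−k₁}·exp(ξ_i+ξ̄_j) and B(m,k₂)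 with (i,j) entry (ν/(conj(p_i)+p_j))·(−conj(p_i)/p_j)^m·((1+a·conj(p_i))/(1−a·p_j))^{−k₂}·exp(η_i+η̄_j), the row vector Φ(n,k₁) with j-th entry p_j^n·(1−a·p_j)^{−k₁}·exp(ξ_j), and the row vector Ψ̄(m,k₂) with j-th entry (−p_j)^{−m}·(1−a·p_j)^{k₂}·exp(η̄_j). Set g^{m,k₂}_{n,k₁} = det[[A(n,k₁), I, Φ(n,k₁)ᵀ],[−I, B(m,k₂), 0],[0, −Ψ̄(m,k₂), 0]], a (2N+1)×(2N+1) determinant. Then for all n, k₁, m, k₂ ∈ ℤ: g^{m+1,k₂}_{n+1,k₁} = −g^{m,k₂}_{n,k₁}. -/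
/-!
Raising `n` and `m` by one amounts to a diagonal rescaling of the bordered matrix: multiply the
rows of the two blocks by `-pᵢ` and `conj pᵢ`, the columns by `(conj pⱼ)⁻¹` and `-pⱼ⁻¹`, and the
border column by `-1`. The blocks `I` and `-I` are left unchanged, and all the factors cancel in the
determinant except the `-1` of the border column.
-/

open Matrix

theorem borderedDet_eq_of_diagonal_scaling {N : ℕ}
    {A B A' B' : Matrix (Fin N) (Fin N) ℂ} {col row col' row' : Fin N ⊕ Fin N → ℂ}
    (u v : Fin N → ℂ) (s t : ℂ) (hu : ∀ i, u i ≠ 0) (hv : ∀ i, v i ≠ 0)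
    (hA : ∀ i j, A' i j = u i * A i j / v j) (hB : ∀ i j, B' i j = v i * B i j / u j)
    (hcol : ∀ i, col' i = t * Sum.elim u v i * col i)
    (hrow : ∀ j, row' j = s * row j / Sum.elim v u j) :
    borderedDet A' B' col' row' = s * t * borderedDet A B col row := by
  set rowScale := Sum.elim (Sum.elim u v) fun _ : Fin 1 => s
  set colScale := Sum.elim (Sum.elim (fun j => (v j)⁻¹) fun j => (u j)⁻¹) fun _ : Fin 1 => t
  have hM : fromBlocks (fromBlocks A' 1 (-1) B') (of fun i (_ : Fin 1) => col' i)
        (of fun (_ : Fin 1) j => row' j) 0 =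
      diagonal rowScale * fromBlocks (fromBlocks A 1 (-1) B) (of fun i (_ : Fin 1) => col i)
        (of fun (_ : Fin 1) j => row j) 0 * diagonal colScale := by
    ext ((i | i) | i) ((j | j) | j) <;>
      simp only [rowScale, colScale, hA, hB, hcol, hrow, div_eq_mul_inv, mul_diagonal,
        diagonal_mul, fromBlocks_apply₁₁, fromBlocks_apply₁₂, fromBlocks_apply₂₁,
        fromBlocks_apply₂₂, of_apply, one_apply, Matrix.neg_apply, Matrix.zero_apply,
        Sum.elim_inl, Sum.elim_inr, mul_ite, ite_mul, mul_one, mul_zero, zero_mul, mul_neg,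
        neg_mul, neg_inj]
    all_goals first | ring1 | (split_ifs with h <;> simp [h, hu, hv])
  have hprod : (∏ i, rowScale i) * ∏ j, colScale j = s * t := by
    simp only [rowScale, colScale, Fintype.prod_sum_type, Sum.elim_inl, Sum.elim_inr,
      Finset.prod_inv_distrib, Finset.univ_unique, Finset.prod_singleton]
    have : ∏ i, u i ≠ 0 := Finset.prod_ne_zero_iff.mpr fun i _ => hu i
    have : ∏ i, v i ≠ 0 := Finset.prod_ne_zero_iff.mpr fun i _ => hv i
    field_simp
  rw [borderedDet, borderedDet, hM, det_mul, det_mul, det_diagonal, det_diagonal, ← hprod]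
  ring

theorem period2_reduction_g_general (N : ℕ)
    (p : Fin N → ℂ) (hp : ∀ i, p i ≠ 0)
    (μ ν : ℂ)
    (a : ℝ)
    (ξ ξb η ηb : Fin N → ℂ)
    (A : ℤ → ℤ → Matrix (Fin N) (Fin N) ℂ)
    (hA : ∀ n k₁ i j, A n k₁ i j =
      (μ * starRingEnd ℂ (p j) / (p i + starRingEnd ℂ (p j))) *
      (-(p i) / starRingEnd ℂ (p j)) ^ n *
      ((1 - (a : ℂ) * p i) / (1 + (a : ℂ) * starRingEnd ℂ (p j))) ^ (-k₁) *
      Complex.exp (ξ i + ξb j))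
    (B : ℤ → ℤ → Matrix (Fin N) (Fin N) ℂ)
    (hB : ∀ m k₂ i j, B m k₂ i j =
      (ν / (starRingEnd ℂ (p i) + p j)) *
      (-(starRingEnd ℂ (p i)) / p j) ^ m *
      ((1 + (a : ℂ) * starRingEnd ℂ (p i)) / (1 - (a : ℂ) * p j)) ^ (-k₂) *
      Complex.exp (η i + ηb j))
    (Φ : ℤ → ℤ → Fin N → ℂ)
    (hΦ : ∀ n k₁ j, Φ n k₁ j =
      p j ^ n * (1 - (a : ℂ) * p j) ^ (-k₁) * Complex.exp (ξ j))
    (Ψb : ℤ → ℤ → Fin N → ℂ)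
    (hΨb : ∀ m k₂ j, Ψb m k₂ j =
      (-(p j)) ^ (-m) * (1 - (a : ℂ) * p j) ^ k₂ * Complex.exp (ηb j))
    (g : ℤ → ℤ → ℤ → ℤ → ℂ)
    (hg : ∀ m k₂ n k₁, g m k₂ n k₁ = borderedDet (A n k₁) (B m k₂)
      (Sum.elim (Φ n k₁) (fun _ => 0))
      (Sum.elim (fun _ => 0) (fun j => -(Ψb m k₂ j)))) :
    ∀ n k₁ m k₂ : ℤ, g (m + 1) k₂ (n + 1) k₁ = -(g m k₂ n k₁) := by
  intro n k₁ m k₂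
  have hpc : ∀ i, starRingEnd ℂ (p i) ≠ 0 := fun i => (map_ne_zero _).mpr (hp i)
  have hnp : ∀ i, -p i ≠ 0 := fun i => neg_ne_zero.mpr (hp i)
  rw [hg, hg, borderedDet_eq_of_diagonal_scaling (fun i => -p i) (fun i => starRingEnd ℂ (p i))
    1 (-1) hnp hpc]
  · ring
  · intro i j
    rw [hA, hA, zpow_add_one₀ (div_ne_zero (hnp i) (hpc j))]
    ring
  · intro i j
    rw [hB, hB, zpow_add_one₀ (div_ne_zero (neg_ne_zero.mpr (hpc i)) (hp j))]
    ring
  · rintro (i | i)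
    · simp only [Sum.elim_inl, hΦ, zpow_add_one₀ (hp i)]
      ring
    · simp
  · rintro (j | j)
    · simp
    · simp only [Sum.elim_inr, hΨb, neg_add, zpow_add₀ (hnp j), _root_.zpow_neg_one]
      field_simp

/-- Period-2 reduction identity `g^{m+1,k₂}_{n+1,k₁} = −g^{m,k₂}_{n,k₁}` for the Gram-type
tau functions of the two-component KP–Toda hierarchy after the reduction
`q_i = conj(p_i)`, `q̄_i = p_i`, `a₁ = −a₂ = a`. -/
theorem period2_reduction_g (N : ℕ) (hN : 1 ≤ N)
    (p : Fin N → ℂ) (hp : ∀ i, p i ≠ 0)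
    (hpp : ∀ i j, p i + starRingEnd ℂ (p j) ≠ 0)
    (μ ν : ℂ) (ξ0 ξb0 η0 ηb0 : Fin N → ℂ)
    (a : ℝ) (ha : a ≠ 0)
    (h1 : ∀ i, 1 - (a : ℂ) * p i ≠ 0)
    (h2 : ∀ i, 1 + (a : ℂ) * starRingEnd ℂ (p i) ≠ 0)
    (x y : ℝ)
    (ξ ξb η ηb : Fin N → ℂ)
    (hξ : ∀ i, ξ i = (x : ℂ) / p i + ξ0 i)
    (hξb : ∀ j, ξb j = (x : ℂ) / starRingEnd ℂ (p j) + ξb0 j)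
    (hη : ∀ i, η i = (y : ℂ) / starRingEnd ℂ (p i) + η0 i)
    (hηb : ∀ j, ηb j = (y : ℂ) / p j + ηb0 j)
    (A : ℤ → ℤ → Matrix (Fin N) (Fin N) ℂ)
    (hA : ∀ n k₁ i j, A n k₁ i j =
      (μ * starRingEnd ℂ (p j) / (p i + starRingEnd ℂ (p j))) *
      (-(p i) / starRingEnd ℂ (p j)) ^ n *
      ((1 - (a : ℂ) * p i) / (1 + (a : ℂ) * starRingEnd ℂ (p j))) ^ (-k₁) *
      Complex.exp (ξ i + ξb j))
    (B : ℤ → ℤ → Matrix (Fin N) (Fin N) ℂ)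
    (hB : ∀ m k₂ i j, B m k₂ i j =
      (ν / (starRingEnd ℂ (p i) + p j)) *
      (-(starRingEnd ℂ (p i)) / p j) ^ m *
      ((1 + (a : ℂ) * starRingEnd ℂ (p i)) / (1 - (a : ℂ) * p j)) ^ (-k₂) *
      Complex.exp (η i + ηb j))
    (Φ : ℤ → ℤ → Fin N → ℂ)
    (hΦ : ∀ n k₁ j, Φ n k₁ j =
      p j ^ n * (1 - (a : ℂ) * p j) ^ (-k₁) * Complex.exp (ξ j))
    (Ψb : ℤ → ℤ → Fin N → ℂ)
    (hΨb : ∀ m k₂ j, Ψb m k₂ j =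
      (-(p j)) ^ (-m) * (1 - (a : ℂ) * p j) ^ k₂ * Complex.exp (ηb j))
    (g : ℤ → ℤ → ℤ → ℤ → ℂ)
    (hg : ∀ m k₂ n k₁, g m k₂ n k₁ = borderedDet (A n k₁) (B m k₂)
      (Sum.elim (Φ n k₁) (fun _ => 0))
      (Sum.elim (fun _ => 0) (fun j => -(Ψb m k₂ j)))) :
    ∀ n k₁ m k₂ : ℤ, g (m + 1) k₂ (n + 1) k₁ = -(g m k₂ n k₁) :=
  period2_reduction_g_general N p hp μ ν a ξ ξb η ηb A hA B hB Φ hΦ Ψb hΨb g hg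
end

section
/- Let N ≥ 1, let p_1,…,p_N ∈ ℂ be nonzero with p_i + conj(p_j) ≠ 0 for all i,j, let μ, ν, ξ_{i0}, ξ̄_{j0}, η_{i0}, η̄_{j0} ∈ ℂ, let a ∈ ℝ, a ≠ 0, with 1 − a·p_i ≠ 0 and 1 + a·conj(p_i) ≠ 0 for all i, and let x₋₁, y₋₁ ∈ ℝ. Set ξ_i = x₋₁/p_i + ξ_{i0}, ξ̄_j = x₋₁/conj(p_j) + ξ̄_{j0}, η_i = y₋₁/conj(p_i) + η_{i0}, η̄_j = y₋₁/p_j + η̄_{j0}. For n, k₁, m, k₂ ∈ ℤ define the N×N matrices A(n,k₁) with (i,j) entry (μ·conj(p_j)/(p_i+conj(p_j)))·(−p_i/conj(p_j))^n·((1−a·p_i)/(1+a·conj(p_j)))^{−k₁}·exp(ξ_i+ξ̄_j) and B(m,k₂) with (i,j) entry (ν/(conj(p_i)+p_j))·(−conj(p_i)/p_j)^m·((1+a·conj(p_i))/(1−a·p_j))^{−k₂}·exp(η_i+η̄_j), and set f^{m,k₂}_{n,k₁} = det[[A(n,k₁), I],[−I, B(m,k₂)]]. Then for all n, k₁, m,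 k₂ ∈ ℤ: f^{m,k₂+1}_{n,k₁+1} = f^{m,k₂}_{n,k₁}. -/
open Matrix

/-!
Shifting `k₁` and `k₂` by one multiplies `A` on the left by `diag (1 - a pᵢ)⁻¹` and on the right
by `diag (1 + a p̄ⱼ)`, and `B` by the same two diagonal matrices with their roles exchanged.
Conjugating `[[A, I], [-I, B]]` by the block diagonal matrices built from them leaves the blocks
`I` and `-I` unchanged, so the determinant is the same.
-/

namespace Matrix

section Gauge

variable {n R : Type*} [Fintype n] [DecidableEq n] [CommRing R]

theorem det_fromBlocks_one_neg_one_gauge (A B P P' Q Q' : Matrix n n R)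
    (hP : P' * P = 1) (hQ : Q' * Q = 1) :
    (fromBlocks (P' * A * Q) 1 (-1) (Q' * B * P)).det = (fromBlocks A 1 (-1) B).det := by
  have hconj : fromBlocks (P' * A * Q) 1 (-1) (Q' * B * P) =
      fromBlocks P' 0 0 Q' * fromBlocks A 1 (-1) B * fromBlocks Q 0 0 P := by
    simp [fromBlocks_multiply, hP, hQ]
  rw [hconj, det_mul, det_mul, det_fromBlocks_zero₂₁, det_fromBlocks_zero₂₁]
  calc P'.det * Q'.det * (fromBlocks A 1 (-1) B).det * (Q.det * P.det)
      = (P' * P).det * (Q' * Q).det * (fromBlocks A 1 (-1) B).det := by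
        rw [det_mul, det_mul]; ring
    _ = (fromBlocks A 1 (-1) B).det := by rw [hP, hQ, det_one, one_mul, one_mul]

end Gauge

section DiagonalScaling

variable {ι K : Type*} [Fintype ι] [DecidableEq ι]

theorem diagonal_inv_mul_diagonal [DivisionSemiring K] {u : ι → K} (hu : ∀ i, u i ≠ 0) :
    diagonal (fun i => (u i)⁻¹) * diagonal u = 1 := by
  rw [diagonal_mul_diagonal, ← diagonal_one]
  exact congrArg diagonal (funext fun i => inv_mul_cancel₀ (hu i))

theorem succ_eq_diagonal_mul_mul_diagonal_of_entry_zpow_neg [Field K]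
    {u v : ι → K} (hu : ∀ i, u i ≠ 0) (hv : ∀ j, v j ≠ 0)
    (g : ι → ι → K) (M : ℤ → Matrix ι ι K)
    (hM : ∀ k i j, M k i j = g i j * (u i / v j) ^ (-k)) (k : ℤ) :
    M (k + 1) = diagonal (fun i => (u i)⁻¹) * M k * diagonal v := by
  ext i j
  rw [mul_diagonal, diagonal_mul, hM, hM, neg_add', zpow_sub_one₀ (div_ne_zero (hu i) (hv j)),
    inv_div]
  field_simp [hu i]

end DiagonalScaling

end Matrix

theorem period2_reduction_f_k_general (N : ℕ)
    (p : Fin N → ℂ)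
    (μ ν : ℂ)
    (a : ℝ)
    (h1 : ∀ i, 1 - (a : ℂ) * p i ≠ 0)
    (h2 : ∀ i, 1 + (a : ℂ) * starRingEnd ℂ (p i) ≠ 0)
    (ξ ξb η ηb : Fin N → ℂ)
    (A : ℤ → ℤ → Matrix (Fin N) (Fin N) ℂ)
    (hA : ∀ n k₁ i j, A n k₁ i j =
      (μ * starRingEnd ℂ (p j) / (p i + starRingEnd ℂ (p j))) *
      (-(p i) / starRingEnd ℂ (p j)) ^ n *
      ((1 - (a : ℂ) * p i) / (1 + (a : ℂ) * starRingEnd ℂ (p j))) ^ (-k₁) *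
      Complex.exp (ξ i + ξb j))
    (B : ℤ → ℤ → Matrix (Fin N) (Fin N) ℂ)
    (hB : ∀ m k₂ i j, B m k₂ i j =
      (ν / (starRingEnd ℂ (p i) + p j)) *
      (-(starRingEnd ℂ (p i)) / p j) ^ m *
      ((1 + (a : ℂ) * starRingEnd ℂ (p i)) / (1 - (a : ℂ) * p j)) ^ (-k₂) *
      Complex.exp (η i + ηb j))
    (f : ℤ → ℤ → ℤ → ℤ → ℂ)
    (hf : ∀ m k₂ n k₁, f m k₂ n k₁ = blockDet (A n k₁) (B m k₂)) :
    ∀ n k₁ m k₂ : ℤ, f m (k₂ + 1) n (k₁ + 1) = f m k₂ n k₁ := by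
  intro n k₁ m k₂
  have hA_succ := succ_eq_diagonal_mul_mul_diagonal_of_entry_zpow_neg h1 h2 _ (A n)
    (fun k i j => (hA n k i j).trans (mul_right_comm _ _ _)) k₁
  have hB_succ := succ_eq_diagonal_mul_mul_diagonal_of_entry_zpow_neg h2 h1 _ (B m)
    (fun k i j => (hB m k i j).trans (mul_right_comm _ _ _)) k₂
  rw [hf, hf, blockDet, blockDet, hA_succ, hB_succ]
  exact det_fromBlocks_one_neg_one_gauge _ _ _ _ _ _
    (diagonal_inv_mul_diagonal h1) (diagonal_inv_mul_diagonal h2)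

/-- Period-2 reduction identity `f^{m,k₂+1}_{n,k₁+1} = f^{m,k₂}_{n,k₁}` for the Gram-type
tau functions of the two-component KP–Toda hierarchy after the reduction
`q_i = conj(p_i)`, `q̄_i = p_i`, `a₁ = −a₂ = a`. -/
theorem period2_reduction_f_k (N : ℕ) (hN : 1 ≤ N)
    (p : Fin N → ℂ) (hp : ∀ i, p i ≠ 0)
    (hpp : ∀ i j, p i + starRingEnd ℂ (p j) ≠ 0)
    (μ ν : ℂ) (ξ0 ξb0 η0 ηb0 : Fin N → ℂ)
    (a : ℝ) (ha : a ≠ 0)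
    (h1 : ∀ i, 1 - (a : ℂ) * p i ≠ 0)
    (h2 : ∀ i, 1 + (a : ℂ) * starRingEnd ℂ (p i) ≠ 0)
    (x y : ℝ)
    (ξ ξb η ηb : Fin N → ℂ)
    (hξ : ∀ i, ξ i = (x : ℂ) / p i + ξ0 i)
    (hξb : ∀ j, ξb j = (x : ℂ) / starRingEnd ℂ (p j) + ξb0 j)
    (hη : ∀ i, η i = (y : ℂ) / starRingEnd ℂ (p i) + η0 i)
    (hηb : ∀ j, ηb j = (y : ℂ) / p j + ηb0 j)
    (A : ℤ → ℤ → Matrix (Fin N) (Fin N) ℂ)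
    (hA : ∀ n k₁ i j, A n k₁ i j =
      (μ * starRingEnd ℂ (p j) / (p i + starRingEnd ℂ (p j))) *
      (-(p i) / starRingEnd ℂ (p j)) ^ n *
      ((1 - (a : ℂ) * p i) / (1 + (a : ℂ) * starRingEnd ℂ (p j))) ^ (-k₁) *
      Complex.exp (ξ i + ξb j))
    (B : ℤ → ℤ → Matrix (Fin N) (Fin N) ℂ)
    (hB : ∀ m k₂ i j, B m k₂ i j =
      (ν / (starRingEnd ℂ (p i) + p j)) *
      (-(starRingEnd ℂ (p i)) / p j) ^ m *
      ((1 + (a : ℂ) * starRingEnd ℂ (p i)) / (1 - (a : ℂ) * p j)) ^ (-k₂) *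
      Complex.exp (η i + ηb j))
    (f : ℤ → ℤ → ℤ → ℤ → ℂ)
    (hf : ∀ m k₂ n k₁, f m k₂ n k₁ = blockDet (A n k₁) (B m k₂)) :
    ∀ n k₁ m k₂ : ℤ, f m (k₂ + 1) n (k₁ + 1) = f m k₂ n k₁ :=
  period2_reduction_f_k_general N p μ ν a h1 h2 ξ ξb η ηb A hA B hB f hf
end

section
/- Let N ≥ 1, let p_1,…,p_N ∈ ℂ be nonzero with p_i + conj(p_j) ≠ 0 for all i,j, let μ, ν, ξ_{i0}, ξ̄_{j0}, η_{i0}, η̄_{j0} ∈ ℂ, let a ∈ ℝ, a ≠ 0, with 1 − a·p_i ≠ 0 and 1 + a·conj(p_i) ≠ 0 for all i, and fix n, k₁, m, k₂ ∈ ℤ. For (x, y) ∈ ℝ² define ξ_i(x) = x/p_i + ξ_{i0}, ξ̄_j(x) = x/conj(p_j) + ξ̄_{j0}, η_i(y) = y/conj(p_i) + η_{i0}, η̄_j(y) = y/p_j + η̄_{j0}, and let F(x, y) be the determinant of the 2N×2N block matrix [[A(x), I],[−I, B(y)]], where A(x) has (i,j) entry (μ·conj(p_j)/(p_i+conj(p_j)))·(−p_i/conj(p_j))^n·((1−a·p_i)/(1+a·conj(p_j)))^{−k₁}·exp(ξ_i(x)+ξ̄_j(x))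 and B(y) has (i,j) entry (ν/(conj(p_i)+p_j))·(−conj(p_i)/p_j)^m·((1+a·conj(p_i))/(1−a·p_j))^{−k₂}·exp(η_i(y)+η̄_j(y)). Then at every point (x, y) ∈ ℝ², the partial derivative of F with respect to x equals the partial derivative of F with respect to y. -/
open Matrix

/-!
The exponential factors make `A (x + t) = Dₜ A(x) Eₜ` and `B(t) = Eₜ B(0) Dₜ` with
diagonal `Dₜ = diag(e^{t/pᵢ})`, `Eₜ = diag(e^{t/p̄ᵢ})`. Since `F = det (1 + A B)` and
`det (1 + X Y) = det (1 + Y X)`, the diagonal factors can be moved around the cycle, giving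
`F(x, y) = F(x + y, 0)`; so `F` depends on `x + y` only and its two partial derivatives agree.
-/

namespace Matrix

variable {n R : Type*} [Fintype n] [DecidableEq n] [CommRing R]

theorem det_fromBlocks_zero_one_neg_one_zero :
    (fromBlocks 0 1 (-1) 0 : Matrix (n ⊕ n) (n ⊕ n) R).det = 1 := by
  have factor : (fromBlocks 0 1 (-1) 0 : Matrix (n ⊕ n) (n ⊕ n) R) =
      fromBlocks 1 1 0 1 * fromBlocks 1 0 (-1) 1 * fromBlocks 1 1 0 1 := by
    simp [fromBlocks_multiply]
  rw [factor, det_mul, det_mul, det_fromBlocks_zero₂₁, det_fromBlocks_zero₁₂]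
  simp

theorem det_fromBlocks_one_neg_one (A B : Matrix n n R) :
    (fromBlocks A 1 (-1) B).det = (1 + A * B).det := by
  have factor : fromBlocks A 1 (-1) B = fromBlocks 1 (-A) B 1 * fromBlocks 0 1 (-1) 0 := by
    simp [fromBlocks_multiply]
  rw [factor, det_mul, det_fromBlocks_zero_one_neg_one_zero, mul_one, det_fromBlocks_one₁₁,
    Matrix.mul_neg, sub_neg_eq_add, det_one_add_mul_comm]

theorem det_one_add_mul_rotate (A B D E : Matrix n n R) :
    (1 + A * (E * B * D)).det = (1 + D * A * E * B).det := by
  rw [show A * (E * B * D) = A * E * B * D by simp only [Matrix.mul_assoc],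
    det_one_add_mul_comm]
  simp only [Matrix.mul_assoc]

end Matrix

theorem blockDet_eq_det_one_add_mul {N : ℕ} (A B : Matrix (Fin N) (Fin N) ℂ) :
    blockDet A B = (1 + A * B).det :=
  Matrix.det_fromBlocks_one_neg_one A B

theorem Matrix.eq_diagonal_exp_mul_mul_diagonal_exp {m n : Type*} [Fintype m]
    [DecidableEq m] [Fintype n] [DecidableEq n] {M : ℝ → Matrix m n ℂ} {C : Matrix m n ℂ}
    {f : m → ℝ → ℂ} {g : n → ℝ → ℂ} {u : m → ℂ} {v : n → ℂ}
    (hM : ∀ x i j, M x i j = C i j * Complex.exp (f i x + g j x))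
    (hf : ∀ i x t, f i (x + t) = f i x + t * u i)
    (hg : ∀ j x t, g j (x + t) = g j x + t * v j) (x t : ℝ) :
    M (x + t) = diagonal (fun i => Complex.exp (t * u i)) * M x *
      diagonal (fun j => Complex.exp (t * v j)) := by
  ext i j
  simp only [mul_diagonal, diagonal_mul, hM, hf, hg]
  rw [show f i x + t * u i + (g j x + t * v j) = (f i x + g j x) + t * u i + t * v j by ring,
    Complex.exp_add, Complex.exp_add]
  ring

theorem deriv_left_eq_deriv_right_of_eq_comp_add {𝕜 E : Type*} [NontriviallyNormedField 𝕜]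
    [NormedAddCommGroup E] [NormedSpace 𝕜 E] {F : 𝕜 → 𝕜 → E} {G : 𝕜 → E}
    (hFG : ∀ x y, F x y = G (x + y)) (x y : 𝕜) :
    deriv (fun x' => F x' y) x = deriv (fun y' => F x y') y := by
  simp only [hFG, deriv_comp_add_const, deriv_comp_const_add]

theorem period2_reduction_deriv_general (N : ℕ)
    (p : Fin N → ℂ)
    (μ ν : ℂ) (ξ0 ξb0 η0 ηb0 : Fin N → ℂ)
    (a : ℝ)
    (n k₁ m k₂ : ℤ)
    (ξ ξb : Fin N → ℝ → ℂ) (η ηb : Fin N → ℝ → ℂ)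
    (hξ : ∀ i x, ξ i x = (x : ℂ) / p i + ξ0 i)
    (hξb : ∀ j x, ξb j x = (x : ℂ) / starRingEnd ℂ (p j) + ξb0 j)
    (hη : ∀ i y, η i y = (y : ℂ) / starRingEnd ℂ (p i) + η0 i)
    (hηb : ∀ j y, ηb j y = (y : ℂ) / p j + ηb0 j)
    (A : ℝ → Matrix (Fin N) (Fin N) ℂ)
    (hA : ∀ x i j, A x i j =
      (μ * starRingEnd ℂ (p j) / (p i + starRingEnd ℂ (p j))) *
      (-(p i) / starRingEnd ℂ (p j)) ^ n *
      ((1 - (a : ℂ) * p i) / (1 + (a : ℂ) * starRingEnd ℂ (p j))) ^ (-k₁) *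
      Complex.exp (ξ i x + ξb j x))
    (B : ℝ → Matrix (Fin N) (Fin N) ℂ)
    (hB : ∀ y i j, B y i j =
      (ν / (starRingEnd ℂ (p i) + p j)) *
      (-(starRingEnd ℂ (p i)) / p j) ^ m *
      ((1 + (a : ℂ) * starRingEnd ℂ (p i)) / (1 - (a : ℂ) * p j)) ^ (-k₂) *
      Complex.exp (η i y + ηb j y))
    (F : ℝ → ℝ → ℂ)
    (hF : ∀ x y, F x y = blockDet (A x) (B y)) :
    ∀ x y : ℝ, deriv (fun x' => F x' y) x = deriv (fun y' => F x y') y := by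
  have affine {c : Fin N → ℂ} {φ : Fin N → ℝ → ℂ} {φ0 : Fin N → ℂ}
      (hφ : ∀ i x, φ i x = (x : ℂ) / c i + φ0 i) (i : Fin N) (x t : ℝ) :
      φ i (x + t) = φ i x + t * (c i)⁻¹ := by
    rw [hφ, hφ]; push_cast; ring
  have shiftA := eq_diagonal_exp_mul_mul_diagonal_exp hA (affine hξ) (affine hξb)
  have shiftB := eq_diagonal_exp_mul_mul_diagonal_exp hB (affine hη) (affine hηb)
  refine deriv_left_eq_deriv_right_of_eq_comp_add (G := fun s => F s 0) fun x y => ?_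
  calc F x y = (1 + A x * B (0 + y)).det := by rw [hF, blockDet_eq_det_one_add_mul, zero_add]
    _ = (1 + A (x + y) * B 0).det := by rw [shiftB, shiftA, det_one_add_mul_rotate]
    _ = F (x + y) 0 := by rw [hF, blockDet_eq_det_one_add_mul]

/-- Reduction identity `∂_{x₋₁} f = ∂_{y₋₁} f` for the tau function `f^{m,k₂}_{n,k₁}`
of the two-component KP–Toda hierarchy, viewed as a function of the two flow
variables, after the period-2 reduction `q_i = conj(p_i)`, `q̄_i = p_i`, `a₁ = −a₂ = a`. -/
theorem period2_reduction_deriv (N : ℕ) (hN : 1 ≤ N)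
    (p : Fin N → ℂ) (hp : ∀ i, p i ≠ 0)
    (hpp : ∀ i j, p i + starRingEnd ℂ (p j) ≠ 0)
    (μ ν : ℂ) (ξ0 ξb0 η0 ηb0 : Fin N → ℂ)
    (a : ℝ) (ha : a ≠ 0)
    (h1 : ∀ i, 1 - (a : ℂ) * p i ≠ 0)
    (h2 : ∀ i, 1 + (a : ℂ) * starRingEnd ℂ (p i) ≠ 0)
    (n k₁ m k₂ : ℤ)
    (ξ ξb : Fin N → ℝ → ℂ) (η ηb : Fin N → ℝ → ℂ)
    (hξ : ∀ i x, ξ i x = (x : ℂ) / p i + ξ0 i)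
    (hξb : ∀ j x, ξb j x = (x : ℂ) / starRingEnd ℂ (p j) + ξb0 j)
    (hη : ∀ i y, η i y = (y : ℂ) / starRingEnd ℂ (p i) + η0 i)
    (hηb : ∀ j y, ηb j y = (y : ℂ) / p j + ηb0 j)
    (A : ℝ → Matrix (Fin N) (Fin N) ℂ)
    (hA : ∀ x i j, A x i j =
      (μ * starRingEnd ℂ (p j) / (p i + starRingEnd ℂ (p j))) *
      (-(p i) / starRingEnd ℂ (p j)) ^ n *
      ((1 - (a : ℂ) * p i) / (1 + (a : ℂ) * starRingEnd ℂ (p j))) ^ (-k₁) *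
      Complex.exp (ξ i x + ξb j x))
    (B : ℝ → Matrix (Fin N) (Fin N) ℂ)
    (hB : ∀ y i j, B y i j =
      (ν / (starRingEnd ℂ (p i) + p j)) *
      (-(starRingEnd ℂ (p i)) / p j) ^ m *
      ((1 + (a : ℂ) * starRingEnd ℂ (p i)) / (1 - (a : ℂ) * p j)) ^ (-k₂) *
      Complex.exp (η i y + ηb j y))
    (F : ℝ → ℝ → ℂ)
    (hF : ∀ x y, F x y = blockDet (A x) (B y)) :
    ∀ x y : ℝ, deriv (fun x' => F x' y) x = deriv (fun y' => F x y') y :=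
  period2_reduction_deriv_general N p μ ν ξ0 ξb0 η0 ηb0 a n k₁ m k₂ ξ ξb η ηb hξ hξb hη hηb A hA B
    hB F hF
end

section
/- Let N ≥ 1, let p_1,…,p_N, p̄_1,…,p̄_N, q_1,…,q_N, q̄_1,…,q̄_N ∈ ℂ be nonzero with p_i + p̄_j ≠ 0 and q_i + q̄_j ≠ 0 for all i,j, let μ, ν, ξ_{i0}, ξ̄_{j0}, η_{i0}, η̄_{j0} ∈ ℂ, let a₁, a₂ ∈ ℝ be nonzero with 1 − a₁ p_i ≠ 0, 1 + a₁ p̄_j ≠ 0, 1 − a₂ q_i ≠ 0, 1 + a₂ q̄_j ≠ 0 for all i,j, and let y₋₁ ∈ ℝ be fixed, with η_i = y₋₁/q_i + η_{i0} and η̄_j = y₋₁/q̄_j + η̄_{j0}. For x ∈ ℝ set ξ_i(x) = x/p_i + ξ_{i0} and ξ̄_j(x) = x/p̄_j + ξ̄_{j0}. For n, k₁, m, k₂ ∈ ℤ define: A(n,k₁)(x) the N×N matrix with entry (μ p̄_j/(p_i+p̄_j))·(−p_i/p̄_j)^n·((1−a₁p_i)/(1+a₁p̄_j))^{−k₁}·exp(ξ_i(x)+ξ̄_j(x));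 B(m,k₂) with entry (ν/(q_i+q̄_j))·(−q_i/q̄_j)^m·((1−a₂q_i)/(1+a₂q̄_j))^{−k₂}·exp(η_i+η̄_j); the row vector Φ(n,k₁)(x) with j-th entry p_j^n (1−a₁p_j)^{−k₁} exp(ξ_j(x)); the row vector Ψ̄(m,k₂) with j-th entry (−q̄_j)^{−m}(1+a₂q̄_j)^{k₂} exp(η̄_j). Set f^{m,k₂}_{n,k₁}(x) = det[[A(n,k₁)(x), I],[−I, B(m,k₂)]] and g^{m,k₂}_{n,k₁}(x) = det[[A(n,k₁)(x), I, Φ(n,k₁)(x)ᵀ],[−I, B(m,k₂), 0],[0, −Ψ̄(m,k₂), 0]]. Then for all n, k₁, m, k₂ ∈ ℤ and all x ∈ ℝ: (d/dx)g^{m,k₂}_{n,k₁}(x)·f^{m,k₂}_{n,k₁}(x) − g^{m,k₂}_{n,k₁}(x)·(d/dx)f^{m,k₂}_{n,k₁}(x) = g^{m,k₂}_{n−1,k₁}(x)·f^{m,k₂}_{n+1,k₁}(x). -/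
open Matrix

/-!
Write `M_n = [[A_n, I], [−I, B]]`, so that `f = det M_n` and `g` is `M_n` bordered by the column
`(Φ_n, 0)` and the row `(0, −Ψ̄)`. The matrix `A_n` is the Gram matrix
`μ p̄_j / (p_i + p̄_j) · Φ_{n,i} · Φ̄_{n,j}` of the wave functions `Φ_n` and the adjoint wave functions
`Φ̄_{n,j} = (−p̄_j)^{−n} (1 + a₁ p̄_j)^{k₁} e^{ξ̄_j}`, which obey `∂ₓΦ_n = Φ_n / p = Φ_{n−1}` and
`∂ₓΦ̄_n = Φ̄_n / p̄ = −Φ̄_{n+1}`. Hence `∂ₓA_n = μ Φ_{n−1} ⊗ Φ̄_n`, `A_{n+1} − A_n = −μ Φ_n ⊗ Φ̄_n` and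
`A_{n−1} − A_n = μ Φ_{n−1} ⊗ Φ̄_{n−1}` all have rank one. By Jacobi's formula
`f'` and `g'` are determinants of `M_n` bordered once and twice; `f_{n+1}` is a bordered determinant,
and so is `g_{n−1}`, because the rank-one change of `A` is along its own bordering column. The bilinear
equation is then Sylvester's identity for a twice-bordered determinant. These determinant identities
are proved for invertible matrices and extended to all matrices by density.
-/

namespace Matrix

variable {ι : Type*}

section CommRing

variable {R : Type*} [CommRing R]

def bordered (X : Matrix ι ι R) (c r : ι → R) (z : R) : Matrix (ι ⊕ Fin 1) (ι ⊕ Fin 1) R :=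
  fromBlocks X (replicateCol (Fin 1) c) (replicateRow (Fin 1) r) (of fun _ _ => z)

variable [Fintype ι] [DecidableEq ι]

theorem det_bordered_one (X : Matrix ι ι R) (c r : ι → R) :
    det (bordered X c r 1) = det (X - vecMulVec c r) := by
  have h1 : (of fun _ _ => (1 : R) : Matrix (Fin 1) (Fin 1) R) = 1 := by
    ext i j; fin_cases i; fin_cases j; rfl
  rw [bordered, h1, det_fromBlocks_one₂₂, vecMulVec_eq (Fin 1)]
  rfl

theorem det_bordered_sub_vecMulVec (X : Matrix ι ι R) (c r u : ι → R) :
    det (bordered (X - vecMulVec c u) c r 0) = det (bordered X c r 0) := by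
  have hcolumnOp : bordered X c r 0 * fromBlocks 1 0 (-replicateRow (Fin 1) u) 1
      = bordered (X - vecMulVec c u) c r 0 := by
    have h0 : (of fun _ _ => (0 : R) : Matrix (Fin 1) (Fin 1) R) = 0 := rfl
    rw [bordered, bordered, fromBlocks_multiply, h0]
    simp only [Matrix.mul_one, Matrix.mul_neg, Matrix.mul_zero, Matrix.zero_mul, mul_one,
      zero_add, neg_zero, add_zero, vecMulVec_eq (Fin 1), sub_eq_add_neg]
    rfl
  rw [← hcolumnOp, det_mul, det_fromBlocks_zero₁₂, det_one, det_one, mul_one, mul_one]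

theorem det_updateRow_eq_vecMul_adjugate (X : Matrix ι ι R) (i : ι) (v : ι → R) :
    det (updateRow X i v) = (v ᵥ* adjugate X) i := by
  rw [← cramer_transpose_apply, cramer_eq_adjugate_mulVec, ← adjugate_transpose, mulVec_transpose]

theorem sum_det_updateRow_vecMulVec (X : Matrix ι ι R) (w v : ι → R) :
    ∑ i, det (updateRow X i (vecMulVec w v i)) = v ⬝ᵥ adjugate X *ᵥ w := by
  have hrow (i : ι) : vecMulVec w v i = w i • v := by ext; simp [vecMulVec_apply]
  simp only [hrow, det_updateRow_smul]
  simp only [det_updateRow_eq_vecMul_adjugate]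
  rw [dotProduct_mulVec, dotProduct_comm]
  rfl

theorem prod_updateRow_perm (X : Matrix ι ι R) (v : ι → R) (σ : Equiv.Perm ι) (i : ι) :
    ∏ j, updateRow X (σ i) v (σ j) j = (∏ j ∈ Finset.univ.erase i, X (σ j) j) * v i := by
  rw [← Finset.prod_erase_mul _ _ (Finset.mem_univ i), updateRow_self]
  congr 1
  refine Finset.prod_congr rfl fun j hj => ?_
  rw [updateRow_ne (σ.injective.ne (Finset.ne_of_mem_erase hj))]

theorem adjugate_eq_det_smul_inv {X : Matrix ι ι R} (hX : IsUnit X.det) :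
    adjugate X = det X • X⁻¹ := by
  rw [inv_def, smul_smul, Ring.mul_inverse_cancel _ hX, one_smul]

theorem det_bordered_of_isUnit {X : Matrix ι ι R} (hX : IsUnit X.det) (c r : ι → R) (z : R) :
    det (bordered X c r z) = det X * (z - r ⬝ᵥ X⁻¹ *ᵥ c) := by
  let := X.invertibleOfIsUnitDet hX
  rw [bordered, det_fromBlocks₁₁, det_unique (n := Fin 1), invOf_eq_nonsing_inv,
    Matrix.mul_assoc, ← replicateCol_mulVec]
  rfl

end CommRing

section Density

variable [Fintype ι] [DecidableEq ι] {𝕜 : Type*} [NontriviallyNormedField 𝕜] [CompleteSpace 𝕜]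

theorem eq_of_forall_isUnit_det {E : Type*} [TopologicalSpace E] [T2Space E]
    {L R : Matrix ι ι 𝕜 → E} (hL : Continuous L) (hR : Continuous R)
    (h : ∀ Y : Matrix ι ι 𝕜, IsUnit Y.det → L Y = R Y) (X : Matrix ι ι 𝕜) : L X = R X := by
  have hroots : {t : 𝕜 | det (X + t • 1) = 0}.Finite := by
    convert Polynomial.finite_setOfPred_isRoot (-X).charpoly_monic.ne_zero using 3 with t
    rw [Polynomial.IsRoot.def, eval_charpoly, scalar_apply, smul_one_eq_diagonal, sub_neg_eq_add,
      add_comm]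
  have hshift : Continuous fun t : 𝕜 => X + t • (1 : Matrix ι ι 𝕜) := by fun_prop
  have := (hL.comp hshift).ext_on (hroots.countable.dense_compl 𝕜) (hR.comp hshift)
    fun t ht => h _ (isUnit_iff_ne_zero.2 ht)
  simpa using congrFun this 0

theorem det_bordered (X : Matrix ι ι 𝕜) (c r : ι → 𝕜) (z : 𝕜) :
    det (bordered X c r z) = z * det X - r ⬝ᵥ adjugate X *ᵥ c := by
  refine eq_of_forall_isUnit_det (L := fun X => det (bordered X c r z))
    (R := fun X => z * det X - r ⬝ᵥ adjugate X *ᵥ c) (by unfold bordered; fun_prop)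
    (by fun_prop) (fun Y hY => ?_) X
  simp only [det_bordered_of_isUnit hY, adjugate_eq_det_smul_inv hY, smul_mulVec, dotProduct_smul,
    smul_eq_mul]
  ring

/-- Sylvester's determinant identity. -/
theorem det_pow_mul_det_fromBlocks {κ : Type*} [Fintype κ] [DecidableEq κ] [Nonempty κ]
    (X : Matrix ι ι 𝕜) (C : Matrix ι κ 𝕜) (R : Matrix κ ι 𝕜) (Z : Matrix κ κ 𝕜) :
    det X ^ (Fintype.card κ - 1) * det (fromBlocks X C R Z)
      = det (of fun a b => det (bordered X (Cᵀ b) (R a) (Z a b))) := by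
  refine eq_of_forall_isUnit_det
    (L := fun X => det X ^ (Fintype.card κ - 1) * det (fromBlocks X C R Z))
    (R := fun X => det (of fun a b => det (bordered X (Cᵀ b) (R a) (Z a b)))) (by fun_prop)
    (continuous_pi fun a => continuous_pi fun b => by unfold bordered; fun_prop).matrix_det
    (fun Y hY => ?_) X
  let := Y.invertibleOfIsUnitDet hY
  have hschur : (of fun a b => det (bordered Y (Cᵀ b) (R a) (Z a b)))
      = det Y • (Z - R * ⅟Y * C) := by
    ext a b
    rw [of_apply, det_bordered_of_isUnit hY, smul_apply, sub_apply, invOf_eq_nonsing_inv,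
      Matrix.mul_assoc, mul_apply']
    rfl
  rw [hschur, det_smul, det_fromBlocks₁₁, ← mul_assoc, ← pow_succ,
    Nat.sub_add_cancel Fintype.card_pos]

theorem det_mul_det_bordered_bordered (X : Matrix ι ι 𝕜) (c₁ c₂ r₁ r₂ : ι → 𝕜)
    (z₁₁ z₁₂ z₂₁ z₂₂ : 𝕜) :
    det X * det (bordered (bordered X c₁ r₁ z₁₁) (Sum.elim c₂ fun _ => z₁₂)
        (Sum.elim r₂ fun _ => z₂₁) z₂₂)
      = det (bordered X c₁ r₁ z₁₁) * det (bordered X c₂ r₂ z₂₂)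
        - det (bordered X c₂ r₁ z₁₂) * det (bordered X c₁ r₂ z₂₁) := by
  let e : (ι ⊕ Fin 1) ⊕ Fin 1 ≃ ι ⊕ Fin 2 :=
    (Equiv.sumAssoc ι (Fin 1) (Fin 1)).trans (Equiv.sumCongr (Equiv.refl ι) finSumFinEquiv)
  have hreindex : bordered (bordered X c₁ r₁ z₁₁) (Sum.elim c₂ fun _ => z₁₂)
      (Sum.elim r₂ fun _ => z₂₁) z₂₂
      = (fromBlocks X (of ![c₁, c₂])ᵀ (of ![r₁, r₂]) !![z₁₁, z₁₂; z₂₁, z₂₂]).submatrix e e := by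
    ext ((i | i) | i) ((j | j) | j) <;> simp [bordered, e, Fin.fin_one_eq_zero] <;> rfl
  have hsylvester :=
    det_pow_mul_det_fromBlocks X (of ![c₁, c₂])ᵀ (of ![r₁, r₂]) !![z₁₁, z₁₂; z₂₁, z₂₂]
  rw [Fintype.card_fin, pow_one] at hsylvester
  rw [hreindex, det_submatrix_equiv_self, hsylvester, det_fin_two]
  rfl

end Density

section Calculus

variable {𝕜 𝔽 : Type*} [NontriviallyNormedField 𝕜] [NontriviallyNormedField 𝔽]
  [NormedAlgebra 𝕜 𝔽]

theorem hasDerivAt_bordered_apply {M : 𝕜 → Matrix ι ι 𝔽} {c : 𝕜 → ι → 𝔽} {w v r : ι → 𝔽}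
    {z : 𝔽} {x : 𝕜} (hM : ∀ i j, HasDerivAt (fun t => M t i j) (w i * v j) x)
    (hc : ∀ i, HasDerivAt (fun t => c t i) (w i) x) (a b : ι ⊕ Fin 1) :
    HasDerivAt (fun t => bordered (M t) (c t) r z a b)
      ((Sum.elim w fun _ => 0) a * (Sum.elim v fun _ => 1) b) x := by
  rcases a with i | i <;> rcases b with j | j
  · exact hM i j
  · simpa [bordered] using hc i
  · simpa [bordered] using hasDerivAt_const x (r j)
  · simpa [bordered] using hasDerivAt_const x z

variable [Fintype ι] [DecidableEq ι]

/-- Jacobi's formula. -/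
theorem hasDerivAt_det {𝔸 : Type*} [NormedCommRing 𝔸] [NormedAlgebra 𝕜 𝔸]
    {M : 𝕜 → Matrix ι ι 𝔸} {M' : Matrix ι ι 𝔸} {x : 𝕜}
    (hM : ∀ i j, HasDerivAt (fun t => M t i j) (M' i j) x) :
    HasDerivAt (fun t => det (M t)) (∑ i, det (updateRow (M x) i (M' i))) x := by
  simp only [det_apply', Finset.sum_comm (γ := ι)]
  refine HasDerivAt.fun_sum fun σ _ => ?_
  have hprod := HasDerivAt.fun_finsetProd (u := Finset.univ) (f := fun i t => M t (σ i) i)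
    (fun i _ => hM (σ i) i)
  refine (hprod.const_mul ((Equiv.Perm.sign σ : ℤ) : 𝔸)).congr_deriv ?_
  conv_rhs => rw [← Equiv.sum_comp σ]
  simp only [Finset.mul_sum, prod_updateRow_perm, smul_eq_mul]

theorem hasDerivAt_det_of_vecMulVec [CompleteSpace 𝔽] {M : 𝕜 → Matrix ι ι 𝔽} {w v : ι → 𝔽}
    {x : 𝕜} (hM : ∀ i j, HasDerivAt (fun t => M t i j) (w i * v j) x) :
    HasDerivAt (fun t => det (M t)) (-det (bordered (M x) w v 0)) x := by
  rw [det_bordered, zero_mul, zero_sub, neg_neg, ← sum_det_updateRow_vecMulVec]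
  exact hasDerivAt_det hM

theorem hirota_bilinear_of_hasDerivAt_vecMulVec [CompleteSpace 𝔽] {M : 𝕜 → Matrix ι ι 𝔽}
    {c : 𝕜 → ι → 𝔽} {w v u r : ι → 𝔽} {x : 𝕜}
    (hM : ∀ i j, HasDerivAt (fun t => M t i j) (w i * v j) x)
    (hc : ∀ i, HasDerivAt (fun t => c t i) (w i) x) :
    deriv (fun t => det (bordered (M t) (c t) r 0)) x * det (M x)
        - det (bordered (M x) (c x) r 0) * deriv (fun t => det (M t)) x
      = det (bordered (M x - vecMulVec w u) w r 0) * det (M x - vecMulVec (c x) v) := by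
  have hf := hasDerivAt_det_of_vecMulVec hM
  have hg := hasDerivAt_det_of_vecMulVec (hasDerivAt_bordered_apply (r := r) (z := 0) hM hc)
  have hsylvester := det_mul_det_bordered_bordered (M x) (c x) w r v 0 0 1 0
  rw [hf.deriv, hg.deriv, det_bordered_sub_vecMulVec, ← det_bordered_one]
  linear_combination -hsylvester

end Calculus

theorem fromBlocks_sub_vecMulVec_elim_zero {κ R : Type*} [Ring R] (A : Matrix ι ι R)
    (B : Matrix ι κ R) (C : Matrix κ ι R) (D : Matrix κ κ R) (u v : ι → R) :
    fromBlocks A B C D - vecMulVec (Sum.elim u 0) (Sum.elim v 0)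
      = fromBlocks (A - vecMulVec u v) B C D := by
  ext (i | i) (j | j) <;> simp [vecMulVec_apply]

end Matrix

theorem hasDerivAt_mul_cexp_div_add (C P a : ℂ) (x : ℝ) :
    HasDerivAt (fun t : ℝ => C * Complex.exp (t / P + a)) (C * Complex.exp (x / P + a) / P) x := by
  have := ((((hasDerivAt_id (x : ℂ)).div_const P).add_const a).cexp.const_mul C).comp_ofReal
  simpa [div_eq_mul_inv, mul_assoc] using this

namespace KPToda

variable {ι 𝕜 𝔽 : Type*}

section Field

variable [Field 𝔽]

def gramMatrix (μ : 𝔽) (p pb φ φb : ι → 𝔽) : Matrix ι ι 𝔽 :=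
  of fun i j => μ * pb j / (p i + pb j) * φ i * φb j

theorem gramMatrix_shift {p pb : ι → 𝔽} (hpb : ∀ j, pb j ≠ 0) (hppb : ∀ i j, p i + pb j ≠ 0)
    (μ : 𝔽) (φ φb : ι → 𝔽) :
    gramMatrix μ p pb (p * φ) (-φb / pb) = gramMatrix μ p pb φ φb - vecMulVec φ (μ • φb) := by
  ext i j
  have := hpb j
  have := hppb i j
  simp only [gramMatrix, of_apply, Matrix.sub_apply, vecMulVec_apply, Pi.mul_apply, Pi.div_apply,
    Pi.neg_apply, Pi.smul_apply, smul_eq_mul]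
  field_simp
  ring

end Field

section Calculus

variable [NontriviallyNormedField 𝕜] [NontriviallyNormedField 𝔽] [NormedAlgebra 𝕜 𝔽]

theorem hasDerivAt_gramMatrix_apply {p pb : ι → 𝔽} (hp : ∀ i, p i ≠ 0) (hpb : ∀ j, pb j ≠ 0)
    (hppb : ∀ i j, p i + pb j ≠ 0) (μ : 𝔽) {φ φb : 𝕜 → ι → 𝔽} {x : 𝕜}
    (hφ : ∀ i, HasDerivAt (fun t => φ t i) (φ x i / p i) x)
    (hφb : ∀ j, HasDerivAt (fun t => φb t j) (φb x j / pb j) x) (i j : ι) :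
    HasDerivAt (fun t => gramMatrix μ p pb (φ t) (φb t) i j) (φ x i / p i * (μ * φb x j)) x := by
  refine (((hφ i).const_mul (μ * pb j / (p i + pb j))).mul (hφb j)).congr_deriv ?_
  have := hp i
  have := hpb j
  have := hppb i j
  field_simp
  ring

theorem hirota_derivative_bilinear_of_gramMatrix [CompleteSpace 𝔽] [Fintype ι] [DecidableEq ι]
    {κ : Type*} [Fintype κ] [DecidableEq κ] {p pb : ι → 𝔽} (hp : ∀ i, p i ≠ 0)
    (hpb : ∀ j, pb j ≠ 0) (hppb : ∀ i j, p i + pb j ≠ 0) (μ : 𝔽) {φ φb : ℤ → 𝕜 → ι → 𝔽}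
    (hφ : ∀ n t, φ (n + 1) t = p * φ n t) (hφb : ∀ n t, φb (n + 1) t = -φb n t / pb)
    (hφ' : ∀ n t i, HasDerivAt (fun s => φ n s i) (φ n t i / p i) t)
    (hφb' : ∀ n t j, HasDerivAt (fun s => φb n s j) (φb n t j / pb j) t)
    (U : Matrix ι κ 𝔽) (V : Matrix κ ι 𝔽) (W : Matrix κ κ 𝔽) (r : ι ⊕ κ → 𝔽) (n : ℤ) (x : 𝕜) :
    deriv (fun t => det (bordered (fromBlocks (gramMatrix μ p pb (φ n t) (φb n t)) U V W)
          (Sum.elim (φ n t) 0) r 0)) x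
        * det (fromBlocks (gramMatrix μ p pb (φ n x) (φb n x)) U V W)
      - det (bordered (fromBlocks (gramMatrix μ p pb (φ n x) (φb n x)) U V W)
          (Sum.elim (φ n x) 0) r 0)
        * deriv (fun t => det (fromBlocks (gramMatrix μ p pb (φ n t) (φb n t)) U V W)) x
      = det (bordered (fromBlocks (gramMatrix μ p pb (φ (n - 1) x) (φb (n - 1) x)) U V W)
          (Sum.elim (φ (n - 1) x) 0) r 0)
        * det (fromBlocks (gramMatrix μ p pb (φ (n + 1) x) (φb (n + 1) x)) U V W) := by
  have hlower : φ n x = p * φ (n - 1) x := by simpa using hφ (n - 1) x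
  have hdiv (i : ι) : φ n x i / p i = φ (n - 1) x i := by
    rw [hlower, Pi.mul_apply, mul_div_cancel_left₀ _ (hp i)]
  have hup : gramMatrix μ p pb (φ (n + 1) x) (φb (n + 1) x)
      = gramMatrix μ p pb (φ n x) (φb n x) - vecMulVec (φ n x) (μ • φb n x) := by
    rw [hφ, hφb, gramMatrix_shift hpb hppb]
  have hdown : gramMatrix μ p pb (φ (n - 1) x) (φb (n - 1) x)
      = gramMatrix μ p pb (φ n x) (φb n x) - vecMulVec (φ (n - 1) x) (-(μ • φb (n - 1) x)) := by
    have := gramMatrix_shift hpb hppb μ (φ (n - 1) x) (φb (n - 1) x)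
    rw [← hφ, ← hφb, sub_add_cancel] at this
    rw [this, vecMulVec_neg, sub_neg_eq_add, sub_add_cancel]
  rw [hup, hdown, ← fromBlocks_sub_vecMulVec_elim_zero, ← fromBlocks_sub_vecMulVec_elim_zero]
  refine hirota_bilinear_of_hasDerivAt_vecMulVec (fun a b => ?_) (fun a => ?_)
  · rcases a with i | i <;> rcases b with j | j
    · simpa [hdiv] using hasDerivAt_gramMatrix_apply hp hpb hppb μ (hφ' n x) (hφb' n x) i j
    · simpa using hasDerivAt_const x (U i j)
    · simpa using hasDerivAt_const x (V i j)
    · simpa using hasDerivAt_const x (W i j)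
  · rcases a with i | i
    · simpa [hdiv] using hφ' n x i
    · simpa using hasDerivAt_const x (0 : 𝔽)

end Calculus

end KPToda

theorem hirota_derivative_bilinear_general (N : ℕ)
    (p pb : Fin N → ℂ)
    (hp : ∀ i, p i ≠ 0) (hpb : ∀ i, pb i ≠ 0)
    (hppb : ∀ i j, p i + pb j ≠ 0)
    (μ : ℂ) (ξ0 ξb0 : Fin N → ℂ)
    (a₁ : ℝ)
    (ξ ξb : Fin N → ℝ → ℂ)
    (hξ : ∀ i x, ξ i x = (x : ℂ) / p i + ξ0 i)
    (hξb : ∀ j x, ξb j x = (x : ℂ) / pb j + ξb0 j)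
    (A : ℤ → ℤ → ℝ → Matrix (Fin N) (Fin N) ℂ)
    (hA : ∀ n k₁ x i j, A n k₁ x i j =
      (μ * pb j / (p i + pb j)) * (-(p i) / pb j) ^ n *
      ((1 - (a₁ : ℂ) * p i) / (1 + (a₁ : ℂ) * pb j)) ^ (-k₁) *
      Complex.exp (ξ i x + ξb j x))
    (B : ℤ → ℤ → Matrix (Fin N) (Fin N) ℂ)
    (Φ : ℤ → ℤ → ℝ → Fin N → ℂ)
    (hΦ : ∀ n k₁ x j, Φ n k₁ x j =
      p j ^ n * (1 - (a₁ : ℂ) * p j) ^ (-k₁) * Complex.exp (ξ j x))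
    (Ψb : ℤ → ℤ → Fin N → ℂ)
    (f : ℤ → ℤ → ℤ → ℤ → ℝ → ℂ)
    (hf : ∀ m k₂ n k₁ x, f m k₂ n k₁ x = blockDet (A n k₁ x) (B m k₂))
    (g : ℤ → ℤ → ℤ → ℤ → ℝ → ℂ)
    (hg : ∀ m k₂ n k₁ x, g m k₂ n k₁ x = borderedDet (A n k₁ x) (B m k₂)
      (Sum.elim (Φ n k₁ x) (fun _ => 0))
      (Sum.elim (fun _ => 0) (fun j => -(Ψb m k₂ j)))) :
    ∀ (n k₁ m k₂ : ℤ) (x : ℝ),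
      deriv (g m k₂ n k₁) x * f m k₂ n k₁ x - g m k₂ n k₁ x * deriv (f m k₂ n k₁) x
      = g m k₂ (n - 1) k₁ x * f m k₂ (n + 1) k₁ x := by
  intro n k₁ m k₂ x
  obtain ⟨Φb, hΦb⟩ : ∃ Φb : ℤ → ℝ → Fin N → ℂ, ∀ n t j,
      Φb n t j = (-pb j) ^ (-n) * (1 + (a₁ : ℂ) * pb j) ^ k₁ * Complex.exp (ξb j t) :=
    ⟨_, fun _ _ _ => rfl⟩
  have hgram (n : ℤ) (t : ℝ) : A n k₁ t = KPToda.gramMatrix μ p pb (Φ n k₁ t) (Φb n t) := by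
    ext i j
    rw [hA, KPToda.gramMatrix, of_apply, hΦ, hΦb, Complex.exp_add, neg_div, ← div_neg, div_zpow,
      div_zpow]
    simp only [_root_.zpow_neg, div_eq_mul_inv, inv_inv]
    ring
  have hf' (n : ℤ) : f m k₂ n k₁ = fun t =>
      det (fromBlocks (KPToda.gramMatrix μ p pb (Φ n k₁ t) (Φb n t)) 1 (-1) (B m k₂)) :=
    funext fun t => by rw [hf, hgram]; rfl
  have hg' (n : ℤ) : g m k₂ n k₁ = fun t =>
      det (bordered (fromBlocks (KPToda.gramMatrix μ p pb (Φ n k₁ t) (Φb n t)) 1 (-1) (B m k₂))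
        (Sum.elim (Φ n k₁ t) 0) (Sum.elim 0 (-Ψb m k₂)) 0) :=
    funext fun t => by rw [hg, hgram]; rfl
  simp only [hf', hg']
  refine KPToda.hirota_derivative_bilinear_of_gramMatrix (φ := fun n => Φ n k₁) (φb := Φb)
    hp hpb hppb μ (fun n t => ?_) (fun n t => ?_) (fun n t i => ?_) (fun n t j => ?_)
    1 (-1) (B m k₂) _ n x
  · ext j
    rw [Pi.mul_apply, hΦ, hΦ, zpow_add_one₀ (hp j)]
    ring
  · ext j
    rw [Pi.div_apply, Pi.neg_apply, hΦb, hΦb, neg_add, zpow_add₀ (neg_ne_zero.2 (hpb j)),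
      _root_.zpow_neg_one]
    field_simp
  · simp only [hΦ, hξ]
    exact hasDerivAt_mul_cexp_div_add _ _ _ t
  · simp only [hΦb, hξb]
    exact hasDerivAt_mul_cexp_div_add _ _ _ t

/-- Hirota derivative bilinear equation `D_{x₋₁} g · f = g_{n−1} f_{n+1}` satisfied by
the Gram-type tau functions of the two-component KP–Toda hierarchy. -/
theorem hirota_derivative_bilinear (N : ℕ) (hN : 1 ≤ N)
    (p pb q qb : Fin N → ℂ)
    (hp : ∀ i, p i ≠ 0) (hpb : ∀ i, pb i ≠ 0) (hq : ∀ i, q i ≠ 0) (hqb : ∀ i, qb i ≠ 0)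
    (hppb : ∀ i j, p i + pb j ≠ 0) (hqqb : ∀ i j, q i + qb j ≠ 0)
    (μ ν : ℂ) (ξ0 ξb0 η0 ηb0 : Fin N → ℂ)
    (a₁ a₂ : ℝ) (ha₁ : a₁ ≠ 0) (ha₂ : a₂ ≠ 0)
    (h1 : ∀ i, 1 - (a₁ : ℂ) * p i ≠ 0) (h2 : ∀ j, 1 + (a₁ : ℂ) * pb j ≠ 0)
    (h3 : ∀ i, 1 - (a₂ : ℂ) * q i ≠ 0) (h4 : ∀ j, 1 + (a₂ : ℂ) * qb j ≠ 0)
    (y : ℝ)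
    (η ηb : Fin N → ℂ)
    (hη : ∀ i, η i = (y : ℂ) / q i + η0 i)
    (hηb : ∀ j, ηb j = (y : ℂ) / qb j + ηb0 j)
    (ξ ξb : Fin N → ℝ → ℂ)
    (hξ : ∀ i x, ξ i x = (x : ℂ) / p i + ξ0 i)
    (hξb : ∀ j x, ξb j x = (x : ℂ) / pb j + ξb0 j)
    (A : ℤ → ℤ → ℝ → Matrix (Fin N) (Fin N) ℂ)
    (hA : ∀ n k₁ x i j, A n k₁ x i j =
      (μ * pb j / (p i + pb j)) * (-(p i) / pb j) ^ n *
      ((1 - (a₁ : ℂ) * p i) / (1 + (a₁ : ℂ) * pb j)) ^ (-k₁) *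
      Complex.exp (ξ i x + ξb j x))
    (B : ℤ → ℤ → Matrix (Fin N) (Fin N) ℂ)
    (hB : ∀ m k₂ i j, B m k₂ i j =
      (ν / (q i + qb j)) * (-(q i) / qb j) ^ m *
      ((1 - (a₂ : ℂ) * q i) / (1 + (a₂ : ℂ) * qb j)) ^ (-k₂) *
      Complex.exp (η i + ηb j))
    (Φ : ℤ → ℤ → ℝ → Fin N → ℂ)
    (hΦ : ∀ n k₁ x j, Φ n k₁ x j =
      p j ^ n * (1 - (a₁ : ℂ) * p j) ^ (-k₁) * Complex.exp (ξ j x))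
    (Ψb : ℤ → ℤ → Fin N → ℂ)
    (hΨb : ∀ m k₂ j, Ψb m k₂ j =
      (-(qb j)) ^ (-m) * (1 + (a₂ : ℂ) * qb j) ^ k₂ * Complex.exp (ηb j))
    (f : ℤ → ℤ → ℤ → ℤ → ℝ → ℂ)
    (hf : ∀ m k₂ n k₁ x, f m k₂ n k₁ x = blockDet (A n k₁ x) (B m k₂))
    (g : ℤ → ℤ → ℤ → ℤ → ℝ → ℂ)
    (hg : ∀ m k₂ n k₁ x, g m k₂ n k₁ x = borderedDet (A n k₁ x) (B m k₂)
      (Sum.elim (Φ n k₁ x) (fun _ => 0))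
      (Sum.elim (fun _ => 0) (fun j => -(Ψb m k₂ j)))) :
    ∀ (n k₁ m k₂ : ℤ) (x : ℝ),
      deriv (g m k₂ n k₁) x * f m k₂ n k₁ x - g m k₂ n k₁ x * deriv (f m k₂ n k₁) x
      = g m k₂ (n - 1) k₁ x * f m k₂ (n + 1) k₁ x :=
  hirota_derivative_bilinear_general N p pb hp hpb hppb μ ξ0 ξb0 a₁ ξ ξb hξ hξb A hA B Φ hΦ Ψb f hf
    g hg
end

section
/- Let N ≥ 1, let p_1,…,p_N, p̄_1,…,p̄_N, q_1,…,q_N, q̄_1,…,q̄_N ∈ ℂ be nonzero with p_i + p̄_j ≠ 0 and q_i + q̄_j ≠ 0 for all i,j, let μ, ν ∈ ℂ, and let a₁, a₂, b₁, b₂ ∈ ℝ be nonzero with 1 − a₁ p_i ≠ 0, 1 + a₁ p̄_j ≠ 0, 1 − a₂ q_i ≠ 0, 1 + a₂ q̄_j ≠ 0, 1 − b₁/p_i ≠ 0, 1 + b₁/p̄_j ≠ 0, 1 − b₂/q_i ≠ 0, 1 + b₂/q̄_j ≠ 0 for all i,j. For n, k₁, l₁, m, k₂, l₂ ∈ ℤ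 define: A(n,k₁,l₁) the N×N matrix with entry (μ p̄_j/(p_i+p̄_j))·(−p_i/p̄_j)^n·((1−a₁p_i)/(1+a₁p̄_j))^{−k₁}·((1−b₁/p_i)/(1+b₁/p̄_j))^{−l₁}; B(m,k₂,l₂) with entry (ν/(q_i+q̄_j))·(−q_i/q̄_j)^m·((1−a₂q_i)/(1+a₂q̄_j))^{−k₂}·((1−b₂/q_i)/(1+b₂/q̄_j))^{−l₂}; the row vector Φ(n,k₁,l₁) with j-th entry p_j^n (1−a₁p_j)^{−k₁}(1−b₁/p_j)^{−l₁}; the row vector Ψ̄(m,k₂,l₂) with j-th entry (−q̄_j)^{−m}(1+a₂q̄_j)^{k₂}(1+b₂/q̄_j)^{l₂}. Set f^{m,k₂,l₂}_{n,k₁,l₁} = det[[A(n,k₁,l₁), I],[−I, B(m,k₂,l₂)]] and g^{m,k₂,l₂}_{n,k₁,l₁} = det[[A(n,k₁,l₁), I, Φ(n,k₁,l₁)ᵀ],[−I, B(m,k₂,l₂), 0],[0, −Ψ̄(m,k₂,l₂), 0]]. Then for all n, k₁, l₁, m, k₂, l₂ ∈ ℤ: (1/a₁)·(g^{m+1,k₂,l₂}_{n,k₁+1,l₁}·f^{m,k₂,l₂}_{n+1,k₁,l₁}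 − g^{m+1,k₂,l₂}_{n,k₁,l₁}·f^{m,k₂,l₂}_{n+1,k₁+1,l₁}) = g^{m+1,k₂,l₂}_{n+1,k₁+1,l₁}·f^{m,k₂,l₂}_{n,k₁,l₁}. -/
/-!
Write `E = [[A, I], [−I, B]]`. Each shift `n ↦ n + 1`, `k₁ ↦ k₁ + 1`, `m ↦ m + 1` changes `A` or
`B` by a rank-one matrix, because the entries are Cauchy-like, `φᵢ ψⱼ / (pᵢ + p̄ⱼ)`, with plane-wave
factors satisfying discrete dispersion relations; moreover
`Φ(n, k₁ + 1) = Φ(n, k₁) + a₁ Φ(n + 1, k₁ + 1)`. A rank-one update of `E` leaves a bordered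
determinant unchanged when it shares the border row or column, and otherwise produces a doubly
bordered determinant. The equation thereby reduces to Jacobi's identity
`K · det E = J₀₀ J₁₁ − J₁₀ J₀₁` relating the doubly bordered determinant `K` to singly bordered
ones `J`. For invertible `E` this is a Schur-complement computation; the general case follows by
genericity.
-/

open Matrix

namespace Matrix

variable {R : Type*} [CommRing R] {n : Type*} [Fintype n] [DecidableEq n]

noncomputable def borderDet (E : Matrix n n R) (c r : n → R) : R :=
  (fromBlocks E (replicateCol (Fin 1) c) (replicateRow (Fin 1) r) 0).det

noncomputable def borderDet₂ (E : Matrix n n R) (c₀ c₁ r₀ r₁ : n → R) : R :=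
  (fromBlocks E (of fun i => ![c₀ i, c₁ i]) (of ![r₀, r₁]) 0).det

theorem borderDet_add_vecMulVec_col (E : Matrix n n R) (c u r : n → R) :
    borderDet (E + vecMulVec c u) c r = borderDet E c r := by
  have h : fromBlocks (E + vecMulVec c u) (replicateCol (Fin 1) c) (replicateRow (Fin 1) r) 0 *
      fromBlocks 1 0 (replicateRow (Fin 1) (-u)) 1
      = fromBlocks E (replicateCol (Fin 1) c) (replicateRow (Fin 1) r) 0 := by
    rw [fromBlocks_multiply]
    congr 1 <;> ext <;> simp [vecMulVec_apply, mul_apply]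
  rw [borderDet, borderDet, ← h, det_mul, det_fromBlocks_zero₁₂]
  simp

theorem borderDet_add_vecMulVec_row (E : Matrix n n R) (y c r : n → R) :
    borderDet (E + vecMulVec y r) c r = borderDet E c r := by
  have h : fromBlocks 1 (replicateCol (Fin 1) (-y)) 0 1 *
      fromBlocks (E + vecMulVec y r) (replicateCol (Fin 1) c) (replicateRow (Fin 1) r) 0
      = fromBlocks E (replicateCol (Fin 1) c) (replicateRow (Fin 1) r) 0 := by
    rw [fromBlocks_multiply]
    congr 1 <;> ext <;> simp [vecMulVec_apply, mul_apply]
  rw [borderDet, borderDet, ← h, det_mul, det_fromBlocks_zero₂₁]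
  simp

omit [Fintype n] in
theorem fromBlocks_replicateCol_eq_updateCol (E : Matrix n n R) (c r : n → R) :
    fromBlocks E (replicateCol (Fin 1) c) (replicateRow (Fin 1) r) 0
      = (fromBlocks E 0 (replicateRow (Fin 1) r) 0).updateCol (Sum.inr 0) (Sum.elim c 0) := by
  ext i (j | j) <;> rcases i with i | i <;> simp [Fin.fin_one_eq_zero]

theorem borderDet_add_smul_col (E : Matrix n n R) (c c' r : n → R) (a : R) :
    borderDet E (c + a • c') r = borderDet E c r + a * borderDet E c' r := by
  have h : (Sum.elim (c + a • c') 0 : n ⊕ Fin 1 → R) = Sum.elim c 0 + a • Sum.elim c' 0 := by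
    ext (i | i) <;> simp
  simp only [borderDet, fromBlocks_replicateCol_eq_updateCol, h, det_updateCol_add,
    det_updateCol_smul]

omit [Fintype n] in
theorem fromBlocks_replicateRow_eq_updateRow (E : Matrix n n R) (C : Matrix n (Fin 1) R)
    (r : n → R) (D : Matrix (Fin 1) (Fin 1) R) :
    fromBlocks E C (replicateRow (Fin 1) r) D
      = (fromBlocks E C 0 0).updateRow (Sum.inr 0) (Sum.elim r (D 0)) := by
  ext (i | i) j <;> rcases j with j | j <;> simp [Fin.fin_one_eq_zero]

theorem det_fromBlocks_replicateCol_replicateRow_one (E : Matrix n n R) (c r : n → R) :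
    (fromBlocks E (replicateCol (Fin 1) c) (replicateRow (Fin 1) r) 1).det
      = borderDet E c r + E.det := by
  have h : (Sum.elim r ((1 : Matrix (Fin 1) (Fin 1) R) 0) : n ⊕ Fin 1 → R)
      = Sum.elim r ((0 : Matrix (Fin 1) (Fin 1) R) 0)
        + Sum.elim (0 : n → R) ((1 : Matrix (Fin 1) (Fin 1) R) 0) := by
    ext (i | i) <;> simp
  rw [fromBlocks_replicateRow_eq_updateRow, h, det_updateRow_add,
    ← fromBlocks_replicateRow_eq_updateRow, ← fromBlocks_replicateRow_eq_updateRow,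
    replicateRow_zero, det_fromBlocks_zero₂₁]
  simp [borderDet]

theorem det_add_vecMulVec (E : Matrix n n R) (x v : n → R) :
    (E + vecMulVec x v).det = E.det + borderDet E x (-v) := by
  have h : E - replicateCol (Fin 1) x * replicateRow (Fin 1) (-v) = E + vecMulVec x v := by
    ext; simp [vecMulVec_apply, mul_apply]
  rw [← h, ← det_fromBlocks_one₂₂, det_fromBlocks_replicateCol_replicateRow_one, add_comm]

theorem borderDet_fromBlocks (E : Matrix n n R) (c x r v : n → R) :
    borderDet (fromBlocks E (replicateCol (Fin 1) c) (replicateRow (Fin 1) r) 0)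
      (Sum.elim x 0) (Sum.elim v 0) = borderDet₂ E c x r v := by
  let e : (n ⊕ Fin 1) ⊕ Fin 1 ≃ n ⊕ Fin 2 :=
    (Equiv.sumAssoc n (Fin 1) (Fin 1)).trans (Equiv.sumCongr (Equiv.refl n) finSumFinEquiv)
  rw [borderDet, borderDet₂, ← det_submatrix_equiv_self e]
  congr 1
  ext ((i | i) | i) ((j | j) | j) <;> simp [e, Fin.fin_one_eq_zero] <;> rfl

theorem fromBlocks_add_vecMulVec₁₁ {m o : Type*} (A : Matrix m m R) (B : Matrix m o R)
    (C : Matrix o m R) (D : Matrix o o R) (x u : m → R) :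
    fromBlocks (A + vecMulVec x u) B C D
      = fromBlocks A B C D + vecMulVec (Sum.elim x 0) (Sum.elim u 0) := by
  ext (i | i) (j | j) <;> simp [vecMulVec_apply]

theorem fromBlocks_add_vecMulVec₂₂ {m o : Type*} (A : Matrix m m R) (B : Matrix m o R)
    (C : Matrix o m R) (D : Matrix o o R) (y w : o → R) :
    fromBlocks A B C (D + vecMulVec y w)
      = fromBlocks A B C D + vecMulVec (Sum.elim 0 y) (Sum.elim 0 w) := by
  ext (i | i) (j | j) <;> simp [vecMulVec_apply]

theorem borderDet_add_vecMulVec (E : Matrix n n R) (x v c r : n → R) :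
    borderDet (E + vecMulVec x v) c r = borderDet E c r + borderDet₂ E c x r (-v) := by
  have h : -(Sum.elim v 0 : n ⊕ Fin 1 → R) = Sum.elim (-v) 0 := by ext (i | i) <;> simp
  rw [borderDet, fromBlocks_add_vecMulVec₁₁, det_add_vecMulVec, h, borderDet_fromBlocks]
  rfl

theorem borderDet_of_invertible (E : Matrix n n R) [Invertible E] (c r : n → R) :
    borderDet E c r = -(E.det * (r ⬝ᵥ ⅟E *ᵥ c)) := by
  rw [borderDet, det_fromBlocks₁₁, det_fin_one]
  simp [dotProduct_mulVec, ← replicateRow_vecMul, -vecMul_vecMul, vecMul]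

theorem borderDet₂_of_invertible (E : Matrix n n R) [Invertible E] (c₀ c₁ r₀ r₁ : n → R) :
    borderDet₂ E c₀ c₁ r₀ r₁ = E.det * ((r₀ ⬝ᵥ ⅟E *ᵥ c₀) * (r₁ ⬝ᵥ ⅟E *ᵥ c₁)
      - (r₀ ⬝ᵥ ⅟E *ᵥ c₁) * (r₁ ⬝ᵥ ⅟E *ᵥ c₀)) := by
  rw [borderDet₂, det_fromBlocks₁₁, det_fin_two]
  simp [dotProduct_mulVec, -vecMul_vecMul, vecMul]

theorem borderDet₂_mul_det_of_invertible (E : Matrix n n R) [Invertible E]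
    (c₀ c₁ r₀ r₁ : n → R) :
    borderDet₂ E c₀ c₁ r₀ r₁ * E.det
      = borderDet E c₀ r₀ * borderDet E c₁ r₁ - borderDet E c₁ r₀ * borderDet E c₀ r₁ := by
  simp only [borderDet₂_of_invertible, borderDet_of_invertible]
  ring

theorem _root_.RingHom.map_borderDet {S : Type*} [CommRing S] (f : R →+* S) (E : Matrix n n R)
    (c r : n → R) : f (borderDet E c r) = borderDet (f.mapMatrix E) (f ∘ c) (f ∘ r) := by
  rw [borderDet, RingHom.map_det, RingHom.mapMatrix_apply, fromBlocks_map, borderDet]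
  congr 2
  all_goals ext; simp

theorem _root_.RingHom.map_borderDet₂ {S : Type*} [CommRing S] (f : R →+* S) (E : Matrix n n R)
    (c₀ c₁ r₀ r₁ : n → R) :
    f (borderDet₂ E c₀ c₁ r₀ r₁)
      = borderDet₂ (f.mapMatrix E) (f ∘ c₀) (f ∘ c₁) (f ∘ r₀) (f ∘ r₁) := by
  rw [borderDet₂, RingHom.map_det, RingHom.mapMatrix_apply, fromBlocks_map, borderDet₂]
  congr 2
  · ext i j; fin_cases j <;> simp
  · ext i j; fin_cases i <;> simp
  · simp

open Polynomial in
/-- Jacobi's identity for bordered determinants. -/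
theorem borderDet₂_mul_det (E : Matrix n n R) (c₀ c₁ r₀ r₁ : n → R) :
    borderDet₂ E c₀ c₁ r₀ r₁ * E.det
      = borderDet E c₀ r₀ * borderDet E c₁ r₁ - borderDet E c₁ r₀ * borderDet E c₀ r₁ := by
  -- `X + E` over `R[X]` has monic determinant, so it becomes invertible in the total ring of
  -- fractions of `R[X]`; evaluating at `X = 0` then recovers `E`.
  let E' : Matrix n n R[X] := charmatrix (-E)
  have generic : borderDet₂ E' (C ∘ c₀) (C ∘ c₁) (C ∘ r₀) (C ∘ r₁) * E'.det
      = borderDet E' (C ∘ c₀) (C ∘ r₀) * borderDet E' (C ∘ c₁) (C ∘ r₁)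
        - borderDet E' (C ∘ c₁) (C ∘ r₀) * borderDet E' (C ∘ c₀) (C ∘ r₁) := by
    let f := algebraMap R[X] (FractionRing R[X])
    apply IsFractionRing.injective R[X] (FractionRing R[X])
    have : Invertible (f.mapMatrix E') := invertibleOfIsUnitDet _ <| by
      rw [← RingHom.map_det]
      exact IsLocalization.map_units _
        (⟨E'.det, (charpoly_monic _).mem_nonZeroDivisors⟩ : nonZeroDivisors R[X])
    simp only [map_sub, map_mul, RingHom.map_borderDet, RingHom.map_borderDet₂, RingHom.map_det]
    exact borderDet₂_mul_det_of_invertible _ _ _ _ _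
  have hE' : (evalRingHom 0).mapMatrix E' = E := by
    ext i j
    rcases eq_or_ne i j with rfl | h <;> simp [E', charmatrix_apply_ne, *]
  have := congrArg (evalRingHom 0) generic
  simp only [map_sub, map_mul, RingHom.map_borderDet, RingHom.map_borderDet₂, RingHom.map_det,
    hE'] at this
  simpa [Function.comp_def] using this

theorem borderDet_det_bilinear (E : Matrix n n R) (x₀ x₁ x₂ r u v y : n → R) (a : R)
    (hx : x₁ = x₀ + a • x₂) :
    borderDet (E + vecMulVec x₁ u + vecMulVec y r) x₁ r * (E + vecMulVec x₀ v).det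
      - borderDet (E + vecMulVec y r) x₀ r * (E + vecMulVec x₁ v).det
      = a * (borderDet (E + vecMulVec x₁ v + vecMulVec y r) x₂ r * E.det) := by
  have shift : a * borderDet (E + vecMulVec x₁ v) x₂ r
      = borderDet E x₁ r - borderDet E x₀ r - borderDet₂ E x₀ x₁ r (-v) := by
    have h := borderDet_add_smul_col (E + vecMulVec x₁ v) x₀ x₂ r a
    rw [← hx, borderDet_add_vecMulVec_col, borderDet_add_vecMulVec] at h
    linear_combination -h
  simp only [borderDet_add_vecMulVec_row, borderDet_add_vecMulVec_col, det_add_vecMulVec]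
  linear_combination -E.det * shift + borderDet₂_mul_det E x₀ x₁ r (-v)

end Matrix

section Waves

variable {K : Type*} [Field K] {ι : Type*}

def wave (s : ι → K) (a b : K) (n k l : ℤ) (i : ι) : K :=
  s i ^ n * (1 - a * s i) ^ (-k) * (1 - b / s i) ^ (-l)

def dualWave (t : ι → K) (a b : K) (n k l : ℤ) (j : ι) : K :=
  (-t j) ^ (-n) * (1 + a * t j) ^ k * (1 + b / t j) ^ l

variable (s t : ι → K) (a b : K) (n k l : ℤ)

theorem wave_mul_dualWave (i j : ι) :
    wave s a b n k l i * dualWave t a b n k l j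
      = (-(s i) / t j) ^ n * ((1 - a * s i) / (1 + a * t j)) ^ (-k)
        * ((1 - b / s i) / (1 + b / t j)) ^ (-l) := by
  rw [neg_div, ← div_neg, div_zpow, div_zpow, div_zpow]
  simp only [wave, dualWave, div_eq_mul_inv, ← _root_.zpow_neg, neg_neg]
  ring

theorem wave_add_one_fst {i : ι} (hs : s i ≠ 0) :
    wave s a b (n + 1) k l i = s i * wave s a b n k l i := by
  rw [wave, wave, zpow_add_one₀ hs]
  ring

theorem wave_eq_mul_wave_add_one_snd {i : ι} (h : 1 - a * s i ≠ 0) :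
    wave s a b n k l i = (1 - a * s i) * wave s a b n (k + 1) l i := by
  rw [wave, wave, neg_add, zpow_add₀ h, _root_.zpow_neg_one]
  field_simp

theorem dualWave_eq_mul_dualWave_add_one_fst {j : ι} (ht : t j ≠ 0) :
    dualWave t a b n k l j = -t j * dualWave t a b (n + 1) k l j := by
  rw [dualWave, dualWave, neg_add, zpow_add₀ (neg_ne_zero.mpr ht), _root_.zpow_neg_one]
  field_simp

theorem dualWave_add_one_snd {j : ι} (h : 1 + a * t j ≠ 0) :
    dualWave t a b n (k + 1) l j = (1 + a * t j) * dualWave t a b n k l j := by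
  rw [dualWave, dualWave, zpow_add_one₀ h]
  ring

theorem wave_add_one_snd_eq_add_smul (hs : ∀ i, s i ≠ 0) (h : ∀ i, 1 - a * s i ≠ 0) :
    wave s a b n (k + 1) l = wave s a b n k l + a • wave s a b (n + 1) (k + 1) l := by
  funext i
  rw [Pi.add_apply, Pi.smul_apply, smul_eq_mul, wave_eq_mul_wave_add_one_snd s a b n k l (h i),
    wave_add_one_fst s a b n (k + 1) l (hs i)]
  ring

end Waves

section Gram

variable {K : Type*} [Field K] {ι : Type*}

def cauchyGram (s t φ ψ : ι → K) : Matrix ι ι K :=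
  Matrix.of fun i j => φ i * ψ j / (s i + t j)

theorem cauchyGram_eq_add_vecMulVec {s t φ ψ φ' ψ' γ δ : ι → K} (hst : ∀ i j, s i + t j ≠ 0)
    (h : ∀ i j, φ' i * ψ' j - φ i * ψ j = (s i + t j) * (γ i * δ j)) :
    cauchyGram s t φ' ψ' = cauchyGram s t φ ψ + vecMulVec γ δ := by
  ext i j
  rw [Matrix.add_apply, vecMulVec_apply, cauchyGram, cauchyGram, of_apply, of_apply,
    div_add' _ _ _ (hst i j), div_left_inj' (hst i j)]
  linear_combination h i j

def waveGram (s t w : ι → K) (a b : K) (n k l : ℤ) : Matrix ι ι K :=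
  cauchyGram s t (wave s a b n k l) (w * dualWave t a b n k l)

theorem waveGram_apply (s t w : ι → K) (a b : K) (n k l : ℤ) (i j : ι) :
    waveGram s t w a b n k l i j
      = w j / (s i + t j) * (-(s i) / t j) ^ n * ((1 - a * s i) / (1 + a * t j)) ^ (-k)
        * ((1 - b / s i) / (1 + b / t j)) ^ (-l) := by
  rw [waveGram, cauchyGram, of_apply, Pi.mul_apply]
  linear_combination w j / (s i + t j) * wave_mul_dualWave s t a b n k l i j

variable {s t : ι → K} (w : ι → K) (a b : K) (n k l : ℤ)

theorem waveGram_add_one_fst (hs : ∀ i, s i ≠ 0) (ht : ∀ j, t j ≠ 0)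
    (hst : ∀ i j, s i + t j ≠ 0) :
    waveGram s t w a b (n + 1) k l
      = waveGram s t w a b n k l
        + vecMulVec (wave s a b n k l) (w * dualWave t a b (n + 1) k l) := by
  refine cauchyGram_eq_add_vecMulVec hst fun i j => ?_
  simp only [Pi.mul_apply, wave_add_one_fst s a b n k l (hs i),
    dualWave_eq_mul_dualWave_add_one_fst t a b n k l (ht j)]
  ring

theorem waveGram_add_one_snd (hst : ∀ i j, s i + t j ≠ 0) (h₁ : ∀ i, 1 - a * s i ≠ 0)
    (h₂ : ∀ j, 1 + a * t j ≠ 0) :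
    waveGram s t w a b n (k + 1) l
      = waveGram s t w a b n k l
        + vecMulVec (wave s a b n (k + 1) l) (a • (w * dualWave t a b n k l)) := by
  refine cauchyGram_eq_add_vecMulVec hst fun i j => ?_
  simp only [Pi.mul_apply, Pi.smul_apply, smul_eq_mul,
    wave_eq_mul_wave_add_one_snd s a b n k l (h₁ i), dualWave_add_one_snd t a b n k l (h₂ j)]
  ring

theorem waveGram_add_one_add_one (hs : ∀ i, s i ≠ 0) (ht : ∀ j, t j ≠ 0)
    (hst : ∀ i j, s i + t j ≠ 0) (h₁ : ∀ i, 1 - a * s i ≠ 0) (h₂ : ∀ j, 1 + a * t j ≠ 0) :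
    waveGram s t w a b (n + 1) (k + 1) l
      = waveGram s t w a b n k l
        + vecMulVec (wave s a b n (k + 1) l) (w * dualWave t a b (n + 1) k l) := by
  refine cauchyGram_eq_add_vecMulVec hst fun i j => ?_
  simp only [Pi.mul_apply, wave_add_one_fst s a b n (k + 1) l (hs i),
    wave_eq_mul_wave_add_one_snd s a b n k l (h₁ i), dualWave_add_one_snd t a b (n + 1) k l (h₂ j),
    dualWave_eq_mul_dualWave_add_one_fst t a b n k l (ht j)]
  ring

end Gram

theorem borderedDet_blockDet_bilinear {N : ℕ} (A B : Matrix (Fin N) (Fin N) ℂ)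
    (x₀ x₁ x₂ u v y w : Fin N → ℂ) (a : ℂ) (hx : x₁ = x₀ + a • x₂) :
    borderedDet (A + vecMulVec x₁ u) (B + vecMulVec y w)
        (Sum.elim x₁ fun _ => 0) (Sum.elim (fun _ => 0) fun j => -w j)
        * blockDet (A + vecMulVec x₀ v) B
      - borderedDet A (B + vecMulVec y w)
        (Sum.elim x₀ fun _ => 0) (Sum.elim (fun _ => 0) fun j => -w j)
        * blockDet (A + vecMulVec x₁ v) B
      = a * (borderedDet (A + vecMulVec x₁ v) (B + vecMulVec y w)
        (Sum.elim x₂ fun _ => 0) (Sum.elim (fun _ => 0) fun j => -w j) * blockDet A B) := by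
  have hy : vecMulVec (Sum.elim 0 y : Fin N ⊕ Fin N → ℂ) (Sum.elim 0 w)
      = vecMulVec (Sum.elim 0 (-y))
          (Sum.elim (fun _ => 0) fun j => -w j : Fin N ⊕ Fin N → ℂ) := by
    ext (i | i) (j | j) <;> simp [vecMulVec_apply]
  have hx' : (Sum.elim x₁ fun _ => 0 : Fin N ⊕ Fin N → ℂ)
      = Sum.elim x₀ (fun _ => 0) + a • Sum.elim x₂ fun _ => 0 := by
    ext (i | i) <;> simp [hx]
  have := borderDet_det_bilinear (fromBlocks A 1 (-1) B) _ _ _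
    (Sum.elim (fun _ => 0) fun j => -w j) (Sum.elim u 0) (Sum.elim v 0) (Sum.elim 0 (-y)) a hx'
  have hE : ∀ (X Y : Matrix (Fin N) (Fin N) ℂ) c r,
      borderedDet X Y c r = borderDet (fromBlocks X 1 (-1) Y) c r := fun _ _ _ _ => rfl
  simp only [hE, blockDet, fromBlocks_add_vecMulVec₂₂, fromBlocks_add_vecMulVec₁₁, hy]
  exact this

theorem fully_discrete_bilinear_1_general (N : ℕ)
    (p pb q qb : Fin N → ℂ)
    (hp : ∀ i, p i ≠ 0) (hpb : ∀ i, pb i ≠ 0) (hq : ∀ i, q i ≠ 0) (hqb : ∀ i, qb i ≠ 0)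
    (hppb : ∀ i j, p i + pb j ≠ 0) (hqqb : ∀ i j, q i + qb j ≠ 0)
    (μ ν : ℂ)
    (a₁ a₂ b₁ b₂ : ℝ) (ha₁ : a₁ ≠ 0)
    (h1 : ∀ i, 1 - (a₁ : ℂ) * p i ≠ 0) (h2 : ∀ j, 1 + (a₁ : ℂ) * pb j ≠ 0)
    (A : ℤ → ℤ → ℤ → Matrix (Fin N) (Fin N) ℂ)
    (hA : ∀ n k₁ l₁ i j, A n k₁ l₁ i j =
      (μ * pb j / (p i + pb j)) * (-(p i) / pb j) ^ n *
      ((1 - (a₁ : ℂ) * p i) / (1 + (a₁ : ℂ) * pb j)) ^ (-k₁) *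
      ((1 - (b₁ : ℂ) / p i) / (1 + (b₁ : ℂ) / pb j)) ^ (-l₁))
    (B : ℤ → ℤ → ℤ → Matrix (Fin N) (Fin N) ℂ)
    (hB : ∀ m k₂ l₂ i j, B m k₂ l₂ i j =
      (ν / (q i + qb j)) * (-(q i) / qb j) ^ m *
      ((1 - (a₂ : ℂ) * q i) / (1 + (a₂ : ℂ) * qb j)) ^ (-k₂) *
      ((1 - (b₂ : ℂ) / q i) / (1 + (b₂ : ℂ) / qb j)) ^ (-l₂))
    (Φ : ℤ → ℤ → ℤ → Fin N → ℂ)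
    (hΦ : ∀ n k₁ l₁ j, Φ n k₁ l₁ j =
      p j ^ n * (1 - (a₁ : ℂ) * p j) ^ (-k₁) * (1 - (b₁ : ℂ) / p j) ^ (-l₁))
    (Ψb : ℤ → ℤ → ℤ → Fin N → ℂ)
    (hΨb : ∀ m k₂ l₂ j, Ψb m k₂ l₂ j =
      (-(qb j)) ^ (-m) * (1 + (a₂ : ℂ) * qb j) ^ k₂ * (1 + (b₂ : ℂ) / qb j) ^ l₂)
    (f : ℤ → ℤ → ℤ → ℤ → ℤ → ℤ → ℂ)
    (hf : ∀ m k₂ l₂ n k₁ l₁, f m k₂ l₂ n k₁ l₁ = blockDet (A n k₁ l₁) (B m k₂ l₂))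
    (g : ℤ → ℤ → ℤ → ℤ → ℤ → ℤ → ℂ)
    (hg : ∀ m k₂ l₂ n k₁ l₁, g m k₂ l₂ n k₁ l₁ = borderedDet (A n k₁ l₁) (B m k₂ l₂)
      (Sum.elim (Φ n k₁ l₁) (fun _ => 0))
      (Sum.elim (fun _ => 0) (fun j => -(Ψb m k₂ l₂ j)))) :
    ∀ n k₁ l₁ m k₂ l₂ : ℤ,
      (1 / (a₁ : ℂ)) * (g (m + 1) k₂ l₂ n (k₁ + 1) l₁ * f m k₂ l₂ (n + 1) k₁ l₁
        - g (m + 1) k₂ l₂ n k₁ l₁ * f m k₂ l₂ (n + 1) (k₁ + 1) l₁)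
      = g (m + 1) k₂ l₂ (n + 1) (k₁ + 1) l₁ * f m k₂ l₂ n k₁ l₁ := by
  intro n k₁ l₁ m k₂ l₂
  obtain rfl : Φ = wave p a₁ b₁ := by funext n k l j; exact hΦ n k l j
  obtain rfl : Ψb = dualWave qb a₂ b₂ := by funext n k l j; exact hΨb n k l j
  have hA' : ∀ n k l, A n k l = waveGram p pb (μ • pb) a₁ b₁ n k l := fun n k l => by
    ext i j
    rw [hA, waveGram_apply, Pi.smul_apply, smul_eq_mul]
  have hB' : ∀ m k l, B m k l = waveGram q qb (fun _ => ν) a₂ b₂ m k l := fun m k l => by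
    ext i j
    rw [hB, waveGram_apply]
  have hBm : B (m + 1) k₂ l₂ = B m k₂ l₂
      + vecMulVec (ν • wave q a₂ b₂ m k₂ l₂) (dualWave qb a₂ b₂ (m + 1) k₂ l₂) := by
    rw [hB', hB', waveGram_add_one_fst _ _ _ _ _ _ hq hqb hqqb]
    ext i j
    simp [vecMulVec_apply, mul_left_comm]
  simp only [hf, hg, hBm]
  simp only [hA', waveGram_add_one_add_one _ _ _ _ _ _ hp hpb hppb h1 h2,
    waveGram_add_one_fst _ _ _ _ _ _ hp hpb hppb, waveGram_add_one_snd _ _ _ _ _ _ hppb h1 h2]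
  rw [borderedDet_blockDet_bilinear _ _ _ _ _ _ _ _ _ _
      (wave_add_one_snd_eq_add_smul p a₁ b₁ n k₁ l₁ hp h1),
    one_div, inv_mul_cancel_left₀ (Complex.ofReal_ne_zero.mpr ha₁)]

/-- First fully discrete bilinear equation for the Gram-type tau functions of the
two-component fully discrete KP–Toda hierarchy. -/
theorem fully_discrete_bilinear_1 (N : ℕ) (hN : 1 ≤ N)
    (p pb q qb : Fin N → ℂ)
    (hp : ∀ i, p i ≠ 0) (hpb : ∀ i, pb i ≠ 0) (hq : ∀ i, q i ≠ 0) (hqb : ∀ i, qb i ≠ 0)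
    (hppb : ∀ i j, p i + pb j ≠ 0) (hqqb : ∀ i j, q i + qb j ≠ 0)
    (μ ν : ℂ)
    (a₁ a₂ b₁ b₂ : ℝ) (ha₁ : a₁ ≠ 0) (ha₂ : a₂ ≠ 0) (hb₁ : b₁ ≠ 0) (hb₂ : b₂ ≠ 0)
    (h1 : ∀ i, 1 - (a₁ : ℂ) * p i ≠ 0) (h2 : ∀ j, 1 + (a₁ : ℂ) * pb j ≠ 0)
    (h3 : ∀ i, 1 - (a₂ : ℂ) * q i ≠ 0) (h4 : ∀ j, 1 + (a₂ : ℂ) * qb j ≠ 0)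
    (h5 : ∀ i, 1 - (b₁ : ℂ) / p i ≠ 0) (h6 : ∀ j, 1 + (b₁ : ℂ) / pb j ≠ 0)
    (h7 : ∀ i, 1 - (b₂ : ℂ) / q i ≠ 0) (h8 : ∀ j, 1 + (b₂ : ℂ) / qb j ≠ 0)
    (A : ℤ → ℤ → ℤ → Matrix (Fin N) (Fin N) ℂ)
    (hA : ∀ n k₁ l₁ i j, A n k₁ l₁ i j =
      (μ * pb j / (p i + pb j)) * (-(p i) / pb j) ^ n *
      ((1 - (a₁ : ℂ) * p i) / (1 + (a₁ : ℂ) * pb j)) ^ (-k₁) *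
      ((1 - (b₁ : ℂ) / p i) / (1 + (b₁ : ℂ) / pb j)) ^ (-l₁))
    (B : ℤ → ℤ → ℤ → Matrix (Fin N) (Fin N) ℂ)
    (hB : ∀ m k₂ l₂ i j, B m k₂ l₂ i j =
      (ν / (q i + qb j)) * (-(q i) / qb j) ^ m *
      ((1 - (a₂ : ℂ) * q i) / (1 + (a₂ : ℂ) * qb j)) ^ (-k₂) *
      ((1 - (b₂ : ℂ) / q i) / (1 + (b₂ : ℂ) / qb j)) ^ (-l₂))
    (Φ : ℤ → ℤ → ℤ → Fin N → ℂ)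
    (hΦ : ∀ n k₁ l₁ j, Φ n k₁ l₁ j =
      p j ^ n * (1 - (a₁ : ℂ) * p j) ^ (-k₁) * (1 - (b₁ : ℂ) / p j) ^ (-l₁))
    (Ψb : ℤ → ℤ → ℤ → Fin N → ℂ)
    (hΨb : ∀ m k₂ l₂ j, Ψb m k₂ l₂ j =
      (-(qb j)) ^ (-m) * (1 + (a₂ : ℂ) * qb j) ^ k₂ * (1 + (b₂ : ℂ) / qb j) ^ l₂)
    (f : ℤ → ℤ → ℤ → ℤ → ℤ → ℤ → ℂ)
    (hf : ∀ m k₂ l₂ n k₁ l₁, f m k₂ l₂ n k₁ l₁ = blockDet (A n k₁ l₁) (B m k₂ l₂))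
    (g : ℤ → ℤ → ℤ → ℤ → ℤ → ℤ → ℂ)
    (hg : ∀ m k₂ l₂ n k₁ l₁, g m k₂ l₂ n k₁ l₁ = borderedDet (A n k₁ l₁) (B m k₂ l₂)
      (Sum.elim (Φ n k₁ l₁) (fun _ => 0))
      (Sum.elim (fun _ => 0) (fun j => -(Ψb m k₂ l₂ j)))) :
    ∀ n k₁ l₁ m k₂ l₂ : ℤ,
      (1 / (a₁ : ℂ)) * (g (m + 1) k₂ l₂ n (k₁ + 1) l₁ * f m k₂ l₂ (n + 1) k₁ l₁
        - g (m + 1) k₂ l₂ n k₁ l₁ * f m k₂ l₂ (n + 1) (k₁ + 1) l₁)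
      = g (m + 1) k₂ l₂ (n + 1) (k₁ + 1) l₁ * f m k₂ l₂ n k₁ l₁ :=
  fully_discrete_bilinear_1_general N p pb q qb hp hpb hq hqb hppb hqqb μ ν a₁ a₂ b₁ b₂ ha₁ h1 h2 A
    hA B hB Φ hΦ Ψb hΨb f hf g hg
end
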